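/- arXiv:2510.09324 — 7 statements merged into one kernel-verified Lean document; each statement's English description precedes it below -/
import Mathlib

section
/- Every submodule V of O_r^d is isomorphic (via an element of GL_d(O_r)) to a module of the form O_r^m × p^{k_1} × ... × p^{k_{n-m}} × 0^{d-n} for some 0 ≤ m ≤ n ≤ d and 0 < k_1 ≤ ... ≤ k_{n-m} < r. -/
/-!
Every ideal of `O ⧸ p ^ r` is a power of `m = p (O ⧸ p ^ r)`, so the principal ideals
generated by the entries of the vectors of `V` form a chain. An entry `v i` generating the
largest of them divides every entry of every vector of `V`; hence `v = v i • w` with `w i = 1`,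
and a permutation followed by a transvection moves `w` to `e₀`. The image of `V` then splits as
`(v i) × V'` with `V' ≤ (O ⧸ p ^ r)ᵈ⁻¹`, and induction on `d` diagonalises `V`; sorting the
exponents makes them monotone.
-/

open Submodule

section ChainRing

variable {A : Type*} [CommRing A]

theorem exists_linearEquiv_apply_eq_single_zero {n : ℕ} {w : Fin (n + 1) → A} {i : Fin (n + 1)}
    (hw : w i = 1) :
    ∃ h : (Fin (n + 1) → A) ≃ₗ[A] (Fin (n + 1) → A), h w = Pi.single 0 1 := by
  set σ := LinearEquiv.funCongrLeft A A (Equiv.swap 0 i)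
  have hσw : σ w 0 = 1 := by simp [σ, hw]
  have hτ : (LinearMap.proj 0 : Module.Dual A (Fin (n + 1) → A)) (Pi.single 0 1 - σ w) = 0 := by
    simp [hσw]
  refine ⟨σ ≪≫ₗ LinearEquiv.transvection hτ, ?_⟩
  simp [LinearMap.transvection.apply, hσw]

theorem dvd_linearMap_apply {ι κ : Type*} (f : (ι → A) →ₗ[A] (κ → A)) {a : A} {x : ι → A}
    (hx : ∀ j, a ∣ x j) (k : κ) : a ∣ f x k := by
  choose c hc using hx
  have : x = a • c := funext hc
  rw [this, map_smul]
  exact dvd_mul_right _ _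

theorem mem_iff_dvd_and_tail_mem {n : ℕ} {W : Submodule A (Fin (n + 1) → A)} {a : A}
    (ha : a • Pi.single 0 1 ∈ W) (hdvd : ∀ y ∈ W, a ∣ y 0) (x : Fin (n + 1) → A) :
    x ∈ W ↔ a ∣ x 0 ∧ Fin.tail x ∈ W.comap ((0 : (Fin n → A) →ₗ[A] A).vecCons LinearMap.id) := by
  have hsplit : ∀ t, a * t = x 0 → x = t • a • Pi.single 0 1 + Matrix.vecCons 0 (Fin.tail x) := by
    intro t ht
    ext j
    cases j using Fin.cases <;> simp [← ht, mul_comm, Fin.tail]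
  rw [mem_comap, LinearMap.vecCons_apply]
  constructor
  · intro hx
    obtain ⟨t, ht⟩ := hdvd x hx
    refine ⟨⟨t, ht⟩, ?_⟩
    rw [hsplit t ht.symm] at hx
    simpa using sub_mem hx (W.smul_mem t ha)
  · rintro ⟨⟨t, ht⟩, hx⟩
    rw [hsplit t ht.symm]
    exact add_mem (W.smul_mem t ha) hx

variable {m : Ideal A} {r : ℕ}

theorem exists_entry_dvd_forall_entry (hm : ∀ x : A, ∃ k ≤ r, Ideal.span {x} = m ^ k) {n : ℕ}
    (V : Submodule A (Fin (n + 1) → A)) :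
    ∃ v ∈ V, ∃ i, ∃ K ≤ r, Ideal.span {v i} = m ^ K ∧ ∀ x ∈ V, ∀ j, v i ∣ x j := by
  classical
  have hex : ∃ K, K ≤ r ∧ ∃ v ∈ V, ∃ i, Ideal.span {v i} = m ^ K := by
    obtain ⟨k, hk, h0⟩ := hm 0
    exact ⟨k, hk, 0, V.zero_mem, 0, h0⟩
  obtain ⟨hK, v, hv, i, hvK⟩ := Nat.find_spec hex
  refine ⟨v, hv, i, _, hK, hvK, fun x hx j => ?_⟩
  obtain ⟨l, hl, hxl⟩ := hm (x j)
  have hKl : Nat.find hex ≤ l := Nat.find_min' hex ⟨hl, x, hx, j, hxl⟩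
  rw [← Ideal.mem_span_singleton, hvK]
  exact Ideal.pow_le_pow_right hKl (hxl ▸ Ideal.mem_span_singleton_self _)

theorem exists_linearEquiv_mem_iff_forall_apply_mem_pow
    (hm : ∀ x : A, ∃ k ≤ r, Ideal.span {x} = m ^ k) (d : ℕ) (V : Submodule A (Fin d → A)) :
    ∃ (g : (Fin d → A) ≃ₗ[A] (Fin d → A)) (k : Fin d → ℕ),
      (∀ i, k i ≤ r) ∧ ∀ x, x ∈ V ↔ ∀ i, g x i ∈ m ^ k i := by
  induction d with
  | zero =>
    exact ⟨LinearEquiv.refl A _, finZeroElim, finZeroElim,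
      fun x => by simpa [Subsingleton.elim x 0] using V.zero_mem⟩
  | succ n ih =>
    obtain ⟨v, hv, i, K, hK, hvK, hdvd⟩ := exists_entry_dvd_forall_entry hm V
    choose c hc using hdvd v hv
    obtain ⟨h, hw⟩ := exists_linearEquiv_apply_eq_single_zero (Function.update_self i 1 c)
    have hv_eq : v = v i • Function.update c i 1 := by
      ext j
      rcases eq_or_ne j i with rfl | hj
      · simp
      · simp [Function.update_of_ne hj, hc j]
    set W := V.comap (h.symm : (Fin (n + 1) → A) →ₗ[A] (Fin (n + 1) → A))
    have haW : v i • Pi.single 0 1 ∈ W := by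
      simpa [W, ← hw, ← map_smul, ← hv_eq] using hv
    have hdvdW : ∀ y ∈ W, v i ∣ y 0 := fun y hy => by
      simpa using dvd_linearMap_apply h.toLinearMap (hdvd _ hy) 0
    obtain ⟨g', k', hk', hg'⟩ := ih (W.comap ((0 : (Fin n → A) →ₗ[A] A).vecCons LinearMap.id))
    refine ⟨h ≪≫ₗ (Fin.consLinearEquiv A fun _ => A).symm ≪≫ₗ
      (LinearEquiv.refl A A).prodCongr g' ≪≫ₗ Fin.consLinearEquiv A fun _ => A,
      Fin.cons K k', Fin.cases hK hk', fun x => ?_⟩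
    have hx : x ∈ V ↔ h x ∈ W := by simp [W]
    rw [hx, mem_iff_dvd_and_tail_mem haW hdvdW, Fin.forall_fin_succ, hg']
    simp [← hvK, Ideal.mem_span_singleton]

theorem map_trans_funCongrLeft_eq_pi {ι : Type*} {V : Submodule A (ι → A)}
    {g : (ι → A) ≃ₗ[A] (ι → A)} {I : ι → Ideal A} (hg : ∀ x, x ∈ V ↔ ∀ i, g x i ∈ I i)
    (σ : Equiv.Perm ι) :
    V.map (g ≪≫ₗ LinearEquiv.funCongrLeft A A σ : (ι → A) →ₗ[A] (ι → A)) =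
      pi Set.univ fun i => (I (σ i) : Submodule A A) := by
  ext y
  rw [mem_map_equiv, hg, mem_pi, ← σ.forall_congr_right]
  simp

end ChainRing

theorem Ideal.exists_eq_map_pow_of_prime {O : Type*} [CommRing O] [IsDedekindDomain O]
    {p : Ideal O} (hp : Prime p) {r : ℕ} (J : Ideal (O ⧸ p ^ r)) :
    ∃ k ≤ r, J = p.map (Ideal.Quotient.mk (p ^ r)) ^ k := by
  have hle : p ^ r ≤ J.comap (Ideal.Quotient.mk (p ^ r)) := fun a ha => by
    simp [Ideal.Quotient.eq_zero_iff_mem.mpr ha]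
  obtain ⟨k, hk, hJ⟩ := (dvd_prime_pow hp r).mp (Ideal.dvd_iff_le.mpr hle)
  refine ⟨k, hk, ?_⟩
  rw [← Ideal.map_pow, ← associated_iff_eq.mp hJ,
    Ideal.map_comap_of_surjective _ Ideal.Quotient.mk_surjective]

theorem submodule_smith_normal_form_general
    (O : Type*) [CommRing O] [IsDedekindDomain O]
    (p : Ideal O) (hp : p.IsPrime) (hp0 : p ≠ ⊥) (r : ℕ) (d : ℕ)
    (V : Submodule (O ⧸ p ^ r) (Fin d → O ⧸ p ^ r)) :
    ∃ (g : (Fin d → O ⧸ p ^ r) ≃ₗ[O ⧸ p ^ r] (Fin d → O ⧸ p ^ r)) (k : Fin d → ℕ),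
      Monotone k ∧ (∀ i, k i ≤ r) ∧
      Submodule.map (g : (Fin d → O ⧸ p ^ r) →ₗ[O ⧸ p ^ r] (Fin d → O ⧸ p ^ r)) V =
        Submodule.pi Set.univ
          (fun i => (Ideal.map (Ideal.Quotient.mk (p ^ r)) (p ^ k i) :
            Submodule (O ⧸ p ^ r) (O ⧸ p ^ r))) := by
  have hm (x : O ⧸ p ^ r) :=
    Ideal.exists_eq_map_pow_of_prime (Ideal.prime_of_isPrime hp0 hp) (Ideal.span {x})
  obtain ⟨g, k, hkr, hg⟩ := exists_linearEquiv_mem_iff_forall_apply_mem_pow hm d V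
  refine ⟨g ≪≫ₗ LinearEquiv.funCongrLeft _ _ (Tuple.sort k), k ∘ Tuple.sort k,
    Tuple.monotone_sort k, fun i => hkr _, ?_⟩
  simp_rw [Ideal.map_pow]
  exact map_trans_funCongrLeft_eq_pi hg _

/-- Every submodule `V ≤ O_r^d` is equivalent, via a linear automorphism of `O_r^d`,
to a module of the form `O_r^m × p^{k_1} × ⋯ × p^{k_{n-m}} × 0^{d-n}`; equivalently,
to `∏ i, p^{k i}` for some monotone `k : Fin d → ℕ` with `k i ≤ r` (here `p^0 = O_r`
and `p^r = 0` in `O_r`). -/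
theorem submodule_smith_normal_form
    (O : Type*) [CommRing O] [IsDomain O] [IsDedekindDomain O]
    (p : Ideal O) (hp : p.IsPrime) (hp0 : p ≠ ⊥) (r : ℕ) (hr : 1 ≤ r) (d : ℕ)
    (V : Submodule (O ⧸ p ^ r) (Fin d → O ⧸ p ^ r)) :
    ∃ (g : (Fin d → O ⧸ p ^ r) ≃ₗ[O ⧸ p ^ r] (Fin d → O ⧸ p ^ r)) (k : Fin d → ℕ),
      Monotone k ∧ (∀ i, k i ≤ r) ∧
      Submodule.map (g : (Fin d → O ⧸ p ^ r) →ₗ[O ⧸ p ^ r] (Fin d → O ⧸ p ^ r)) V =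
        Submodule.pi Set.univ
          (fun i => (Ideal.map (Ideal.Quotient.mk (p ^ r)) (p ^ k i) :
            Submodule (O ⧸ p ^ r) (O ⧸ p ^ r))) :=
  submodule_smith_normal_form_general O p hp hp0 r d V
end

section
/- If a submodule V ≤ O_r^d is generated by n elements, then every submodule W ≤ V is also generated by n elements. -/
/-!
Localising at `p` shows that `O ⧸ p ^ r` is a quotient of a discrete valuation ring, hence a
principal ideal ring. Over a principal ideal ring, a submodule `W` of `Rx₀ + ⋯ + Rxₙ₋₁` needs
at most `n` generators: the image of `W` modulo `N = Rx₁ + ⋯ + Rxₙ₋₁` lies in the cyclic module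
spanned by the image of `x₀`, so it is cyclic, generated by the image of some `w ∈ W`; then
`W = Rw + (W ∩ N)` by the modular law, and `W ∩ N` needs at most `n - 1` generators by induction.
-/

open Submodule Set

theorem IsDedekindDomain.isPrincipalIdealRing_quotient_pow {O : Type*} [CommRing O]
    [IsDedekindDomain O] (p : Ideal O) [p.IsPrime] (hp0 : p ≠ ⊥) (r : ℕ) :
    IsPrincipalIdealRing (O ⧸ p ^ r) := by
  have : p.IsMaximal := Ideal.IsPrime.isMaximal ‹_› hp0
  let Oₚ := Localization.AtPrime p
  have : IsDiscreteValuationRing Oₚ :=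
    IsLocalization.AtPrime.isDiscreteValuationRing_of_dedekind_domain O hp0 Oₚ
  have : IsPrincipalIdealRing (Oₚ ⧸ IsLocalRing.maximalIdeal Oₚ ^ r) :=
    IsPrincipalIdealRing.of_surjective _ Ideal.Quotient.mk_surjective
  exact IsPrincipalIdealRing.of_surjective _
    (IsLocalization.AtPrime.equivQuotMaximalIdealPow p Oₚ r).symm.surjective

namespace Submodule

variable {R M : Type*} [CommRing R] [IsPrincipalIdealRing R] [AddCommGroup M] [Module R M]

theorem exists_eq_span_singleton_of_le_span_singleton {x : M} {W : Submodule R M}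
    (hW : W ≤ R ∙ x) : ∃ y : M, W = R ∙ y := by
  let φ := LinearMap.toSpanSingleton R M x
  obtain ⟨a, ha⟩ := (IsPrincipalIdealRing.principal (W.comap φ)).principal
  have hW_map : (W.comap φ).map φ = W := by
    rw [map_comap_eq, ← LinearMap.span_singleton_eq_range, inf_eq_right.mpr hW]
  exact ⟨φ a, by rw [← hW_map, ha, map_span, Set.image_singleton]⟩

theorem exists_mem_eq_span_singleton_sup_inf {x : M} {N W : Submodule R M}
    (hW : W ≤ (R ∙ x) ⊔ N) : ∃ w ∈ W, W = (R ∙ w) ⊔ (W ⊓ N) := by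
  have hW_image : W.map N.mkQ ≤ R ∙ N.mkQ x := by
    rw [← image_singleton, ← map_span, map_le_iff_le_comap, comap_map_mkQ, sup_comm]
    exact hW
  obtain ⟨y, hy⟩ := exists_eq_span_singleton_of_le_span_singleton hW_image
  obtain ⟨w, hwW, rfl⟩ : y ∈ W.map N.mkQ := hy ▸ mem_span_singleton_self y
  refine ⟨w, hwW, le_antisymm ?_ (sup_le ((span_singleton_le_iff_mem _ _).mpr hwW) inf_le_left)⟩
  have hW_le : W ≤ (R ∙ w) ⊔ N := by
    rw [sup_comm, ← comap_map_mkQ, map_span, image_singleton, ← hy]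
    exact le_comap_map _ _
  rw [inf_comm, ← sup_inf_assoc_of_le N ((span_singleton_le_iff_mem _ _).mpr hwW)]
  exact le_inf hW_le le_rfl

theorem exists_fin_span_range_eq_of_le {n : ℕ} {g : Fin n → M} {W : Submodule R M}
    (hW : W ≤ span R (range g)) : ∃ t : Fin n → M, span R (range t) = W := by
  induction n generalizing W with
  | zero =>
    refine ⟨g, ?_⟩
    rw [range_eq_empty, span_empty] at hW ⊢
    exact (le_bot_iff.mp hW).symm
  | succ n ih =>
    rw [← Fin.cons_self_tail g, Fin.range_cons, span_insert] at hW
    obtain ⟨w, -, hW_eq⟩ := exists_mem_eq_span_singleton_sup_inf hW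
    obtain ⟨t, ht⟩ := ih (g := Fin.tail g) (W := W ⊓ _) inf_le_right
    exact ⟨Fin.cons w t, by rw [Fin.range_cons, span_insert, ht, ← hW_eq]⟩

end Submodule

theorem submodule_of_fg_is_fg_general
    (O : Type*) [CommRing O] [IsDedekindDomain O]
    (p : Ideal O) (hp : p.IsPrime) (hp0 : p ≠ ⊥) (r : ℕ) (d n : ℕ)
    (V W : Submodule (O ⧸ p ^ r) (Fin d → O ⧸ p ^ r))
    (hV : ∃ s : Fin n → (Fin d → O ⧸ p ^ r), Submodule.span (O ⧸ p ^ r) (Set.range s) = V)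
    (hWV : W ≤ V) :
    ∃ t : Fin n → (Fin d → O ⧸ p ^ r), Submodule.span (O ⧸ p ^ r) (Set.range t) = W := by
  have := IsDedekindDomain.isPrincipalIdealRing_quotient_pow p hp0 r
  obtain ⟨s, rfl⟩ := hV
  exact Submodule.exists_fin_span_range_eq_of_le hWV

/-- If a submodule `V ≤ O_r^d` is generated by `n` elements, then every submodule
`W ≤ V` is also generated by `n` elements. -/
theorem submodule_of_fg_is_fg
    (O : Type*) [CommRing O] [IsDomain O] [IsDedekindDomain O]
    (p : Ideal O) (hp : p.IsPrime) (hp0 : p ≠ ⊥) (r : ℕ) (hr : 1 ≤ r) (d n : ℕ)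
    (V W : Submodule (O ⧸ p ^ r) (Fin d → O ⧸ p ^ r))
    (hV : ∃ s : Fin n → (Fin d → O ⧸ p ^ r), Submodule.span (O ⧸ p ^ r) (Set.range s) = V)
    (hWV : W ≤ V) :
    ∃ t : Fin n → (Fin d → O ⧸ p ^ r), Submodule.span (O ⧸ p ^ r) (Set.range t) = W :=
  submodule_of_fg_is_fg_general O p hp hp0 r d n V W hV hWV
end

section
/- The number of free rank-n submodules of O_r^d equals S_n^d := (d choose n)_q · q^{(r-1)n(d-n)}, where (d choose n)_q is the Gaussian binomial coefficient. -/
/-!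
Over the finite local ring `R = O/p^r`, with residue field `k` of size `q` and maximal ideal `m`
of size `q^(r-1)`, a family of vectors in `R^d` is linearly independent exactly when its reduction
to `k^d` is: one direction is Nakayama's lemma, the other multiplies a relation that holds modulo
`m` by a nonzero element killed by `m`. Counting `n`-tuples fibre by fibre over their reduction
gives `|m|^(nd) · ∏_{i<n} (q^d - q^i)` linearly independent ones. Each free rank-`n` submodule is
spanned by exactly as many of them as `R^n` has bases, which is the count for `d = n`; dividing
and using `(d choose n)_q · ∏_{i<n} (q^n - q^i) = ∏_{i<n} (q^d - q^i)` gives the formula.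
-/

/-- The Gaussian (q-)binomial coefficient `(n choose k)_q`, defined via the
q-Pascal recursion `(n+1 choose k+1)_q = (n choose k)_q + q^{k+1} (n choose k+1)_q`. -/
def gaussBinomial (q : ℕ) : ℕ → ℕ → ℕ
  | _, 0 => 1
  | 0, _ + 1 => 0
  | n + 1, k + 1 => gaussBinomial q n k + q ^ (k + 1) * gaussBinomial q n (k + 1)

open Finset IsLocalRing Module Submodule

theorem prod_range_succ_pow_sub_pow {R : Type*} [CommRing R] (q : R) (m t : ℕ) :
    ∏ i ∈ range (t + 1), (q ^ (m + 1) - q ^ i) =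
      (q ^ (m + 1) - 1) * q ^ t * ∏ i ∈ range t, (q ^ m - q ^ i) := by
  have h : ∀ i, q ^ (m + 1) - q ^ (i + 1) = q * (q ^ m - q ^ i) := fun i => by ring
  rw [prod_range_succ', prod_congr rfl fun i _ => h i, prod_mul_distrib, prod_const, card_range]
  ring

theorem gaussBinomial_cast_mul_prod_pow_sub_pow (q d n : ℕ) :
    (gaussBinomial q d n : ℤ) * ∏ i ∈ range n, ((q : ℤ) ^ n - q ^ i) =
      ∏ i ∈ range n, ((q : ℤ) ^ d - q ^ i) := by
  induction d generalizing n with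
  | zero => cases n <;> simp [gaussBinomial, prod_range_succ']
  | succ d ih =>
    cases n with
    | zero => simp [gaussBinomial]
    | succ k =>
      have ih' := ih (k + 1)
      rw [prod_range_succ_pow_sub_pow, prod_range_succ] at ih'
      simp only [gaussBinomial, Nat.cast_add, Nat.cast_mul, Nat.cast_pow]
      rw [prod_range_succ_pow_sub_pow, prod_range_succ_pow_sub_pow]
      linear_combination ((q : ℤ) ^ (k + 1) - 1) * q ^ k * ih k + (q : ℤ) ^ (k + 1) * ih'

theorem cast_prod_pow_sub_pow {q : ℕ} (hq : 1 ≤ q) {n m : ℕ} (hnm : n ≤ m) :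
    ((∏ i ∈ range n, (q ^ m - q ^ i) : ℕ) : ℤ) = ∏ i ∈ range n, ((q : ℤ) ^ m - q ^ i) := by
  push_cast
  refine prod_congr rfl fun i hi => ?_
  rw [Nat.cast_sub (Nat.pow_le_pow_right hq (by simp at hi; omega))]
  push_cast
  rfl

theorem gaussBinomial_mul_prod_pow_sub_pow {q : ℕ} (hq : 1 ≤ q) {d n : ℕ} (hn : n ≤ d) :
    gaussBinomial q d n * ∏ i ∈ range n, (q ^ n - q ^ i) = ∏ i ∈ range n, (q ^ d - q ^ i) := by
  have h := gaussBinomial_cast_mul_prod_pow_sub_pow q d n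
  rw [← cast_prod_pow_sub_pow hq le_rfl, ← cast_prod_pow_sub_pow hq hn] at h
  exact_mod_cast h

theorem Nat.card_eq_mul_of_card_fiber {α β : Type*} [Finite α] [Finite β] (f : α → β)
    {q : β → Prop} (hf : ∀ x, q (f x)) {c : ℕ} (hc : ∀ y, q y → Nat.card {x // f x = y} = c) :
    Nat.card α = c * Nat.card (Subtype q) := by
  have := Fintype.ofFinite (Subtype q)
  rw [← Nat.card_congr (Equiv.sigmaSubtypeFiberEquiv f q hf), Nat.card_sigma,
    Finset.sum_congr rfl fun (y : Subtype q) _ => hc y.1 y.2, Finset.sum_const, Finset.card_univ,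
    smul_eq_mul, Nat.card_eq_fintype_card, mul_comm]

theorem Nat.card_fiber_comp_left {ι A B : Type*} [Fintype ι] (f : A → B) (w : ι → B) :
    Nat.card {v : ι → A // f ∘ v = w} = ∏ i, Nat.card {a // f a = w i} := by
  rw [← Nat.card_pi]
  exact Nat.card_congr ((Equiv.subtypeEquivRight fun v => funext_iff).trans
    (Equiv.subtypePiEquivPi (p := fun i a => f a = w i)))

section FreeSubmodules

variable {R M : Type*} [CommRing R] [AddCommGroup M] [Module R M]

theorem LinearIndependent.span_eq_top_of_finite [Finite R] {ι : Type*} [Fintype ι]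
    {v : ι → ι → R} (hv : LinearIndependent R v) : span R (Set.range v) = ⊤ := by
  rw [span_range_eq_top_iff_surjective_fintypeLinearCombination]
  exact Finite.injective_iff_surjective.1
    (linearIndependent_iff_injective_fintypeLinearCombination.1 hv)

noncomputable def Submodule.basisEquivSpanEq {ι : Type*} (V : Submodule R M) :
    Basis ι R V ≃ {v : {v : ι → M // LinearIndependent R v} // span R (Set.range v.1) = V} where
  toFun b := ⟨⟨V.subtype ∘ b, b.linearIndependent.map' V.subtype V.ker_subtype⟩, by
    rw [Set.range_comp, span_image, b.span_eq, map_top, range_subtype]⟩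
  invFun v := (Basis.span v.1.2).map (LinearEquiv.ofEq _ _ v.2)
  left_inv b := Basis.eq_of_apply_eq fun i => Subtype.ext <| by
    rw [Basis.map_apply, LinearEquiv.coe_ofEq_apply, Basis.span_apply]
    rfl
  right_inv v := Subtype.ext (Subtype.ext (funext fun i => by simp [Basis.span_apply]))

theorem card_linearIndependent_eq_mul_card_free [Nontrivial R] [Finite R] [Finite M] (n : ℕ) :
    Nat.card {v : Fin n → M // LinearIndependent R v} =
      Nat.card {v : Fin n → Fin n → R // LinearIndependent R v} *
        Nat.card {V : Submodule R M // Free R V ∧ finrank R V = n} := by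
  refine Nat.card_eq_mul_of_card_fiber (fun v => span R (Set.range v.1)) (fun v =>
    ⟨.of_basis (Basis.span v.2), by rw [finrank_span_eq_card v.2, Fintype.card_fin]⟩) ?_
  rintro V ⟨hfree, hrank⟩
  have e : V ≃ₗ[R] (⊤ : Submodule R (Fin n → R)) :=
    (finBasisOfFinrankEq R V hrank).equivFun ≪≫ₗ (LinearEquiv.ofTop ⊤ rfl).symm
  calc Nat.card {v : {v : Fin n → M // LinearIndependent R v} // span R (Set.range v.1) = V}
      = Nat.card (Basis (Fin n) R V) := Nat.card_congr V.basisEquivSpanEq.symm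
    _ = Nat.card (Basis (Fin n) R (⊤ : Submodule R (Fin n → R))) :=
        Nat.card_congr ⟨(·.map e), (·.map e.symm), fun b => by ext; simp, fun b => by ext; simp⟩
    _ = Nat.card {v : {v : Fin n → Fin n → R // LinearIndependent R v} //
          span R (Set.range v.1) = ⊤} := Nat.card_congr (Submodule.basisEquivSpanEq ⊤)
    _ = _ := Nat.card_congr (Equiv.subtypeUnivEquiv fun v => v.2.span_eq_top_of_finite)

end FreeSubmodules

section LocalRing

variable {R : Type*} [CommRing R] [IsLocalRing R]

theorem IsLocalRing.exists_ne_zero_forall_mul_eq_zero [IsArtinianRing R] :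
    ∃ s : R, s ≠ 0 ∧ ∀ x ∈ maximalIdeal R, x * s = 0 := by
  obtain ⟨P, hP, -⟩ := exists_le_isAssociatedPrime_of_isNoetherianRing R (1 : R) one_ne_zero
  obtain ⟨hPprime, s, hPs⟩ := isAssociatedPrime_iff.1 hP
  obtain rfl : P = maximalIdeal R := eq_maximalIdeal (IsArtinianRing.isMaximal_of_isPrime P)
  refine ⟨s, fun hs => hPprime.ne_top (by simp [hPs, hs]), fun x hx => ?_⟩
  rw [hPs, mem_colon_singleton] at hx
  simpa using hx

variable {ι κ : Type*}

theorem LinearIndependent.map_residue [IsArtinianRing R] [Fintype ι] {v : ι → κ → R}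
    (hv : LinearIndependent R v) :
    LinearIndependent (ResidueField R) (fun j => residue R ∘ v j) := by
  obtain ⟨s, hs0, hs⟩ := exists_ne_zero_forall_mul_eq_zero (R := R)
  rw [Fintype.linearIndependent_iff] at hv ⊢
  intro g hg j
  obtain ⟨c, rfl⟩ := (residue_surjective (R := R)).comp_left g
  have hmem : ∀ i, ∑ j, c j * v j i ∈ maximalIdeal R := fun i => by
    rw [← residue_eq_zero_iff]
    simpa using congrFun hg i
  have hsc : ∀ j, s * c j = 0 := hv _ <| funext fun i => by
    simpa [sum_mul, mul_assoc, mul_comm s] using hs _ (hmem i)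
  show residue R (c j) = 0
  rw [residue_eq_zero_iff, mem_maximalIdeal, mem_nonunits_iff]
  exact fun hunit => hs0 (hunit.mul_left_eq_zero.1 (hsc j))

theorem LinearIndependent.of_map_residue [Fintype κ] [DecidableEq κ] {v : ι → κ → R}
    (hv : LinearIndependent (ResidueField R) (fun j => residue R ∘ v j)) :
    LinearIndependent R v := by
  refine IsLocalRing.linearIndependent_of_flat v (LinearIndependent.of_comp
    (TensorProduct.piScalarRight R (ResidueField R) (ResidueField R) κ).toLinearMap ?_)
  convert hv with j
  ext i
  simp [Algebra.smul_def]

theorem IsLocalRing.card_fiber_residue (z : ResidueField R) :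
    Nat.card {x : R // residue R x = z} = Nat.card (maximalIdeal R) := by
  obtain ⟨x₀, rfl⟩ := residue_surjective z
  refine Nat.card_congr (Equiv.subtypeEquiv (Equiv.subRight x₀) fun x => ?_)
  rw [Equiv.subRight_apply, ← residue_eq_zero_iff, map_sub, sub_eq_zero]

theorem IsLocalRing.card_eq_card_maximalIdeal_mul_card_residueField :
    Nat.card R = Nat.card (maximalIdeal R) * Nat.card (ResidueField R) :=
  (maximalIdeal R).card_eq_card_quotient_mul_card

variable [Finite R]

instance IsLocalRing.ResidueField.finite : Finite (ResidueField R) :=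
  .of_surjective _ residue_surjective

theorem IsLocalRing.card_linearIndependent {n ℓ : ℕ} (hn : n ≤ ℓ) :
    Nat.card {v : Fin n → Fin ℓ → R // LinearIndependent R v} =
      Nat.card (maximalIdeal R) ^ (n * ℓ) *
        ∏ i ∈ range n, (Nat.card (ResidueField R) ^ ℓ - Nat.card (ResidueField R) ^ i) := by
  have := Fintype.ofFinite (ResidueField R)
  let red (v : Fin n → Fin ℓ → R) : Fin n → Fin ℓ → ResidueField R :=
    (fun u : Fin ℓ → R => residue R ∘ u) ∘ v
  have hfiber (w) : Nat.card {v // red v = w} = Nat.card (maximalIdeal R) ^ (n * ℓ) := by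
    rw [Nat.card_fiber_comp_left]
    simp only [Nat.card_fiber_comp_left, card_fiber_residue, prod_const, card_univ,
      Fintype.card_fin, ← pow_mul, mul_comm]
  have hfiber_linearIndependent (w) (hw : LinearIndependent (ResidueField R) w) :
      Nat.card {v : {v // LinearIndependent R v} // red v.1 = w} =
        Nat.card (maximalIdeal R) ^ (n * ℓ) := by
    rw [← hfiber w]
    exact Nat.card_congr (Equiv.subtypeSubtypeEquivSubtype (p := fun v => LinearIndependent R v)
      (q := fun v => red v = w) fun h => by
        subst h
        exact LinearIndependent.of_map_residue hw)
  rw [Nat.card_eq_mul_of_card_fiber (fun v => red v.1) (fun v => v.2.map_residue)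
      hfiber_linearIndependent, _root_.card_linearIndependent (by rwa [finrank_fin_fun]),
    finrank_fin_fun, ← Nat.card_eq_fintype_card,
    Fin.prod_univ_eq_prod_range fun i =>
      Nat.card (ResidueField R) ^ ℓ - Nat.card (ResidueField R) ^ i]

theorem IsLocalRing.card_free_finrank_eq {d n : ℕ} (hn : n ≤ d) :
    Nat.card {V : Submodule R (Fin d → R) // Free R V ∧ finrank R V = n} =
      gaussBinomial (Nat.card (ResidueField R)) d n *
        Nat.card (maximalIdeal R) ^ (n * (d - n)) := by
  set q := Nat.card (ResidueField R)
  set Q := Nat.card (maximalIdeal R)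
  have hq : 1 < q := Finite.one_lt_card
  have key := card_linearIndependent_eq_mul_card_free (R := R) (M := Fin d → R) n
  rw [card_linearIndependent hn, card_linearIndependent le_rfl,
    ← gaussBinomial_mul_prod_pow_sub_pow hq.le hn] at key
  have hpos : 0 < Q ^ (n * n) * ∏ i ∈ range n, (q ^ n - q ^ i) :=
    Nat.mul_pos (pow_pos Nat.card_pos _) (prod_pos fun i hi =>
      Nat.sub_pos_of_lt (Nat.pow_lt_pow_right hq (mem_range.1 hi)))
  have hexp : n * d = n * (d - n) + n * n := by rw [← mul_add, Nat.sub_add_cancel hn]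
  refine Nat.eq_of_mul_eq_mul_right hpos ?_
  rw [mul_comm, ← key, hexp, pow_add]
  ring

end LocalRing

namespace Ideal

variable {O : Type*} [CommRing O] {p : Ideal O} [p.IsMaximal] {r : ℕ}

theorem eq_map_mk_of_isMaximal_quotient_pow {M : Ideal (O ⧸ p ^ r)} (hM : M.IsMaximal) :
    M = p.map (Quotient.mk _) := by
  have hcomap : (M.comap (Quotient.mk _)).IsMaximal :=
    comap_isMaximal_of_surjective _ Quotient.mk_surjective
  have hp : p ≤ M.comap (Quotient.mk _) :=
    hcomap.isPrime.le_of_pow_le (n := r) (mk_ker.ge.trans (ker_le_comap _))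
  rw [← map_comap_of_surjective _ Quotient.mk_surjective M,
    ← IsMaximal.eq_of_le ‹_› hcomap.ne_top hp]

theorem isLocalRing_quotient_pow (hr : r ≠ 0) : IsLocalRing (O ⧸ p ^ r) := by
  have : Nontrivial (O ⧸ p ^ r) :=
    Quotient.nontrivial_iff.2 (ne_top_of_le_ne_top (IsMaximal.ne_top ‹_›) (pow_le_self hr))
  obtain ⟨M, hM⟩ := exists_maximal (O ⧸ p ^ r)
  exact .of_unique_max_ideal ⟨M, hM, fun N hN =>
    (eq_map_mk_of_isMaximal_quotient_pow hN).trans (eq_map_mk_of_isMaximal_quotient_pow hM).symm⟩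

theorem card_residueField_quotient_pow [IsLocalRing (O ⧸ p ^ r)] (hr : r ≠ 0) :
    Nat.card (IsLocalRing.ResidueField (O ⧸ p ^ r)) = Nat.card (O ⧸ p) :=
  Nat.card_congr ((quotEquivOfEq (eq_map_mk_of_isMaximal_quotient_pow
    (maximalIdeal.isMaximal _))).trans ((DoubleQuot.quotQuotEquivQuotSup _ _).trans
      (quotEquivOfEq (sup_eq_right.2 (pow_le_self hr))))).toEquiv

end Ideal

theorem card_free_rank_n_submodules_general
    (O : Type*) [CommRing O] [IsDedekindDomain O]
    (p : Ideal O) (hp : p.IsPrime) (hp0 : p ≠ ⊥) (r : ℕ) (hr : 1 ≤ r) (d n : ℕ)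
    (hn : n ≤ d) [Finite (O ⧸ p)] (q : ℕ) (hq : Nat.card (O ⧸ p) = q) :
    Nat.card {V : Submodule (O ⧸ p ^ r) (Fin d → O ⧸ p ^ r) //
        Module.Free (O ⧸ p ^ r) V ∧ Module.finrank (O ⧸ p ^ r) V = n} =
      gaussBinomial q d n * q ^ ((r - 1) * n * (d - n)) := by
  have : p.IsMaximal := hp.isMaximal hp0
  have : IsLocalRing (O ⧸ p ^ r) := Ideal.isLocalRing_quotient_pow (by omega)
  have hq0 : 0 < q := hq ▸ Nat.card_pos
  have hcard : Nat.card (O ⧸ p ^ r) = q ^ r := by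
    rw [← hq, ← cardQuot_apply, ← cardQuot_apply, cardQuot_pow_of_prime hp0]
  have : Finite (O ⧸ p ^ r) := Nat.finite_of_card_ne_zero (hcard ▸ (pow_pos hq0 r).ne')
  have hk : Nat.card (ResidueField (O ⧸ p ^ r)) = q :=
    (Ideal.card_residueField_quotient_pow (by omega)).trans hq
  have hm : Nat.card (maximalIdeal (O ⧸ p ^ r)) = q ^ (r - 1) := by
    have h := card_eq_card_maximalIdeal_mul_card_residueField (R := O ⧸ p ^ r)
    rw [hcard, hk] at h
    refine Nat.eq_of_mul_eq_mul_right hq0 ?_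
    rw [← h, ← pow_succ, Nat.sub_add_cancel hr]
  rw [IsLocalRing.card_free_finrank_eq hn, hk, hm, ← pow_mul]
  ring_nf

/-- The number of free rank-`n` submodules of `O_r^d` is
`(d choose n)_q · q^{(r-1)n(d-n)}`. -/
theorem card_free_rank_n_submodules
    (O : Type*) [CommRing O] [IsDomain O] [IsDedekindDomain O]
    (p : Ideal O) (hp : p.IsPrime) (hp0 : p ≠ ⊥) (r : ℕ) (hr : 1 ≤ r) (d n : ℕ)
    (hn : n ≤ d) [Finite (O ⧸ p)] (q : ℕ) (hq : Nat.card (O ⧸ p) = q) :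
    Nat.card {V : Submodule (O ⧸ p ^ r) (Fin d → O ⧸ p ^ r) //
        Module.Free (O ⧸ p ^ r) V ∧ Module.finrank (O ⧸ p ^ r) V = n} =
      gaussBinomial q d n * q ^ ((r - 1) * n * (d - n)) :=
  card_free_rank_n_submodules_general O p hp hp0 r hr d n hn q hq
end

section
/- GL_d(O_r) acts transitively on the set of free rank-n submodules of O_r^d, and the stabilizer of the standard submodule spanned by e_1,...,e_n has index (d choose n)_q · q^{(r-1)n(d-n)}. -/
/-!
Over `R = O/p^r`, whose reduction `ρ : R → O/p` has nilpotent kernel, a square matrix is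
invertible iff its reduction is. If `V` is free of rank `n`, a basis `v` of `V` stays linearly
independent mod `p`: lift a relation to coefficients `c_i` and multiply by a nonzero
`t ∈ p^(r-1)/p^r`, which annihilates `ker ρ`. This gives `∑ t c_i v_i = 0` over `R`, so
`t c_i = 0`, no `c_i` is a unit, and all `c_i` reduce to `0`. Extending the reduced basis to a
basis of `(O/p)^d` and lifting gives `g ∈ GL_d(R)` carrying `⟨e_1, …, e_n⟩` onto `V`.

The stabilizer of `⟨e_1, …, e_n⟩` is the block upper triangular group, of order
`|GL_n(R)| |GL_{d-n}(R)| |R|^(n(d-n))`, and `|GL_s(R)| = |ker ρ|^(s²) |GL_s(O/p)|`. The index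
formula then reduces to `|GL_d(F_q)| = (d choose n)_q |GL_n(F_q)| |GL_{d-n}(F_q)| q^(n(d-n))`.
-/

open Matrix

open Finset Function

section GaussianBinomial

def prodPowSubOne (q m : ℕ) : ℕ := ∏ j ∈ range m, (q ^ (j + 1) - 1)

lemma prodPowSubOne_succ (q m : ℕ) :
    prodPowSubOne q (m + 1) = prodPowSubOne q m * (q ^ (m + 1) - 1) :=
  prod_range_succ _ _

lemma gaussBinomial_zero_right (q d : ℕ) : gaussBinomial q d 0 = 1 := by
  cases d <;> rfl

lemma gaussBinomial_eq_zero_of_lt (q : ℕ) : ∀ {d k : ℕ}, d < k → gaussBinomial q d k = 0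
  | 0, _ + 1, _ => rfl
  | d + 1, k + 1, h => by
    rw [gaussBinomial, gaussBinomial_eq_zero_of_lt q (by omega),
      gaussBinomial_eq_zero_of_lt q (by omega), mul_zero, add_zero]

lemma gaussBinomial_self (q : ℕ) : ∀ d, gaussBinomial q d d = 1
  | 0 => rfl
  | d + 1 => by
    rw [gaussBinomial, gaussBinomial_self q d, gaussBinomial_eq_zero_of_lt q (by omega),
      mul_zero, add_zero]

lemma gaussBinomial_add_mul_prodPowSubOne {q : ℕ} (hq : 1 ≤ q) :
    ∀ n m, gaussBinomial q (n + m) n * prodPowSubOne q n * prodPowSubOne q m =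
      prodPowSubOne q (n + m)
  | 0, m => by simp [gaussBinomial_zero_right, prodPowSubOne]
  | n, 0 => by simp [gaussBinomial_self, prodPowSubOne]
  | n + 1, m + 1 => by
    have ih₁ := gaussBinomial_add_mul_prodPowSubOne hq n (m + 1)
    have ih₂ := gaussBinomial_add_mul_prodPowSubOne hq (n + 1) m
    rw [show n + (m + 1) = n + m + 1 by ring, prodPowSubOne_succ q m] at ih₁
    rw [show n + 1 + m = n + m + 1 by ring, prodPowSubOne_succ q n] at ih₂
    have key : (q ^ (n + 1) - 1) + q ^ (n + 1) * (q ^ (m + 1) - 1) =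
        q ^ (n + m + 1 + 1) - 1 := by
      have h₁ : 1 ≤ q ^ (n + 1) := Nat.one_le_pow _ _ hq
      have h₂ : 1 ≤ q ^ (m + 1) := Nat.one_le_pow _ _ hq
      have h₃ : 1 ≤ q ^ (n + m + 1 + 1) := Nat.one_le_pow _ _ hq
      zify [h₁, h₂, h₃]
      ring
    rw [show n + 1 + (m + 1) = n + m + 1 + 1 by ring, gaussBinomial, prodPowSubOne_succ q n,
      prodPowSubOne_succ q m, prodPowSubOne_succ q (n + m + 1), ← key]
    calc _ = gaussBinomial q (n + m + 1) n * prodPowSubOne q n *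
            (prodPowSubOne q m * (q ^ (m + 1) - 1)) * (q ^ (n + 1) - 1) +
          q ^ (n + 1) * (gaussBinomial q (n + m + 1) (n + 1) *
            (prodPowSubOne q n * (q ^ (n + 1) - 1)) * prodPowSubOne q m) * (q ^ (m + 1) - 1) := by
          ring
      _ = _ := by rw [ih₁, ih₂]; ring

lemma prod_range_pow_sub_pow (q m : ℕ) :
    ∏ i ∈ range m, (q ^ m - q ^ i) = q ^ (∑ i ∈ range m, i) * prodPowSubOne q m := by
  have h : ∀ i ∈ range m, q ^ m - q ^ i = q ^ i * (q ^ (m - 1 - i + 1) - 1) := by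
    intro i hi
    rw [Nat.mul_sub, mul_one, ← pow_add]
    have := mem_range.mp hi
    congr 2
    omega
  rw [prod_congr rfl h, prod_mul_distrib, prod_pow_eq_pow_sum,
    prod_range_reflect (fun j => q ^ (j + 1) - 1) m, prodPowSubOne]

lemma sum_range_id_add (n m : ℕ) :
    ∑ i ∈ range (n + m), i = ∑ i ∈ range n, i + ∑ i ∈ range m, i + n * m := by
  rw [sum_range_add, sum_add_distrib, sum_const, card_range, smul_eq_mul]
  ring

variable (K : Type*) [Field K] [Finite K]

lemma card_GL_fin_field (s : ℕ) :
    Nat.card (GL (Fin s) K) =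
      Nat.card K ^ (∑ i ∈ range s, i) * prodPowSubOne (Nat.card K) s := by
  have := Fintype.ofFinite K
  rw [card_GL_field, Fin.prod_univ_eq_prod_range (fun i => Fintype.card K ^ s - Fintype.card K ^ i),
    Nat.card_eq_fintype_card, prod_range_pow_sub_pow]

lemma card_GL_field_add (n m : ℕ) :
    Nat.card (GL (Fin (n + m)) K) = gaussBinomial (Nat.card K) (n + m) n *
      Nat.card (GL (Fin n) K) * Nat.card (GL (Fin m) K) * Nat.card K ^ (n * m) := by
  simp only [card_GL_fin_field, sum_range_id_add,
    ← gaussBinomial_add_mul_prodPowSubOne (Nat.card_pos (α := K)) n m]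
  ring

end GaussianBinomial

section LocalHom

variable {R S : Type*} [CommRing R] [CommRing S]

lemma RingHom.card_ker_mul_card_of_surjective (f : R →+* S) (hf : Surjective f) :
    Nat.card (RingHom.ker f) * Nat.card S = Nat.card R := by
  rw [← f.toAddMonoidHom.ker.card_mul_index, AddSubgroup.index_ker,
    AddMonoidHom.range_eq_top.mpr hf, AddSubgroup.card_top]
  rfl

lemma isLocalHom_of_surjective_of_isNilpotent (f : R →+* S) (hf : Surjective f)
    (h : ∀ a, f a = 0 → IsNilpotent a) : IsLocalHom f where
  map_nonunit a ha := by
    obtain ⟨b, hb⟩ := hf ↑ha.unit⁻¹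
    have hab : IsNilpotent (a * b - 1) := h _ (by simp [hb])
    exact isUnit_of_mul_isUnit_left (by simpa using hab.isUnit_one_add)

lemma Ideal.Quotient.isLocalHom_factor_pow (p : Ideal R) {r : ℕ} (hr : r ≠ 0) :
    IsLocalHom (factor (Ideal.pow_le_self hr : p ^ r ≤ p)) :=
  isLocalHom_of_surjective_of_isNilpotent _ (factor_surjective _) fun a ha => by
    obtain ⟨x, rfl⟩ := mk_surjective a
    rw [factor_mk, eq_zero_iff_mem] at ha
    exact ⟨r, by rw [← map_pow, eq_zero_iff_mem]; exact Ideal.pow_mem_pow ha r⟩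

variable {ι : Type*} [Fintype ι] [DecidableEq ι] (f : R →+* S)

lemma Matrix.GeneralLinearGroup.mem_ker_map_iff (g : GL ι R) :
    g ∈ (map f).ker ↔ (g : Matrix ι ι R).map f = 1 := by
  rw [MonoidHom.mem_ker, Units.ext_iff]
  rfl

variable [IsLocalHom f]

lemma Matrix.isUnit_map_iff_of_isLocalHom (M : Matrix ι ι R) : IsUnit (M.map f) ↔ IsUnit M := by
  rw [isUnit_iff_isUnit_det, isUnit_iff_isUnit_det, ← isUnit_map_iff f M.det,
    RingHom.map_det]
  rfl

namespace Matrix.GeneralLinearGroup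

lemma map_surjective (hf : Surjective f) : Surjective (map (n := ι) f) := by
  intro g
  let M : Matrix ι ι R := of fun i j => surjInv hf (g i j)
  have hM : M.map f = g := by ext i j; exact surjInv_eq hf _
  have hMu : IsUnit M := (isUnit_map_iff_of_isLocalHom f M).mp (hM ▸ g.isUnit)
  exact ⟨hMu.unit, Units.ext hM⟩

noncomputable def kerMapEquiv : (map (n := ι) f).ker ≃ (ι → ι → RingHom.ker f) where
  toFun g i j := ⟨((g : GL ι R) : Matrix ι ι R) i j - (1 : Matrix ι ι R) i j, by
    have h₁ := congrFun₂ ((mem_ker_map_iff f g).mp g.2) i j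
    have h₂ := congrFun₂ (Matrix.map_one f (map_zero f) (map_one f)) i j
    simp only [map_apply] at h₁ h₂
    rw [RingHom.mem_ker, map_sub, h₁, h₂, sub_self]⟩
  invFun N :=
    have hN : (1 + of fun i j => (N i j : R)).map f = 1 := by
      ext i j
      simp [Matrix.one_apply, apply_ite f, RingHom.mem_ker.mp (N i j).2]
    ⟨((isUnit_map_iff_of_isLocalHom f _).mp (hN ▸ isUnit_one)).unit,
      (mem_ker_map_iff f _).mpr hN⟩
  left_inv g := by
    ext i j
    simp
  right_inv N := by
    ext i j
    simp

lemma card_eq_card_ker_pow_mul (hf : Surjective f) :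
    Nat.card (GL ι R) =
      Nat.card (RingHom.ker f) ^ (Fintype.card ι * Fintype.card ι) * Nat.card (GL ι S) := by
  rw [← (map f).ker.card_mul_index, Subgroup.index_ker,
    MonoidHom.range_eq_top.mpr (map_surjective f hf), Subgroup.card_top,
    Nat.card_congr (kerMapEquiv f), Nat.card_pi]
  simp [Nat.card_pi, pow_mul]

end Matrix.GeneralLinearGroup

end LocalHom

section Residue

variable {R K : Type*} [CommRing R] [Field K] (ρ : R →+* K) [IsLocalHom ρ]

lemma LinearIndependent.map_of_mul_ker_eq_zero (hρ : Surjective ρ) {t : R} (ht : t ≠ 0)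
    (htk : ∀ a, ρ a = 0 → t * a = 0) {ι κ : Type*} [Fintype ι] {x : ι → κ → R}
    (hx : LinearIndependent R x) : LinearIndependent K fun i => ρ ∘ x i := by
  rw [Fintype.linearIndependent_iff] at hx ⊢
  intro g hg i
  choose c hc using fun i => hρ (g i)
  have hsum : ∑ i, (t * c i) • x i = 0 := by
    ext k
    have hk := congrFun hg k
    simp only [Finset.sum_apply, Pi.smul_apply, Function.comp_apply, smul_eq_mul,
      Pi.zero_apply] at hk ⊢
    simp_rw [mul_assoc, ← Finset.mul_sum]
    exact htk _ (by simpa [map_sum, hc] using hk)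
  by_contra hgi
  have hci : IsUnit (c i) := (isUnit_map_iff ρ _).mp (by rw [hc]; exact Ne.isUnit hgi)
  exact ht (hci.mul_left_eq_zero.mp (hx _ hsum i))

end Residue

section BasisExtension

variable {K V : Type*} [Field K] [AddCommGroup V] [Module K V]

lemma Module.Basis.sumExtend_inl {ι : Type*} {v : ι → V} (hv : LinearIndependent K v) (i : ι) :
    Basis.sumExtend hv (Sum.inl i) = v i := by
  simp only [Basis.sumExtend, Basis.reindex_apply, Basis.extend_apply_self]
  rfl

lemma LinearIndependent.exists_basis_extending [FiniteDimensional K V] {ι : Type*} [Fintype ι]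
    (hV : Module.finrank K V = Fintype.card ι) (P : ι → Prop) [DecidablePred P]
    {v : {i // P i} → V} (hv : LinearIndependent K v) :
    ∃ b : Module.Basis ι K V, ∀ j : {i // P i}, b j = v j := by
  let b₀ := Module.Basis.sumExtend hv
  have := Module.Finite.finite_basis b₀
  have := Finite.sum_right (β := Module.Basis.sumExtendIndex hv) {i // P i}
  obtain ⟨e⟩ : Nonempty (Module.Basis.sumExtendIndex hv ≃ {i // ¬P i}) := by
    rw [← Finite.card_eq]
    have h := Module.finrank_eq_nat_card_basis b₀
    rw [Nat.card_sum, hV] at h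
    simp only [Nat.card_eq_fintype_card, Fintype.card_subtype_compl] at h ⊢
    omega
  refine ⟨b₀.reindex ((Equiv.sumCongr (Equiv.refl _) e).trans (Equiv.sumCompl P)),
    fun j => ?_⟩
  rw [Module.Basis.reindex_apply, Equiv.symm_trans_apply, Equiv.sumCompl_symm_apply_of_pos j.2]
  exact Module.Basis.sumExtend_inl hv j

end BasisExtension

section CoordSubmodule

variable (R : Type*) [CommSemiring R] {ι : Type*} (P : ι → Prop) [DecidablePred P]

abbrev coordSubmodule : Submodule R (ι → R) :=
  Submodule.pi Set.univ fun i => if P i then ⊤ else ⊥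

variable {R P}

lemma mem_coordSubmodule {x : ι → R} :
    x ∈ coordSubmodule R P ↔ ∀ i, ¬P i → x i = 0 := by
  simp only [coordSubmodule, Submodule.mem_pi, Set.mem_univ, forall_const]
  refine forall_congr' fun i => ?_
  by_cases h : P i <;> simp [h]

variable [Fintype ι] [DecidableEq ι]

lemma coordSubmodule_eq_span :
    coordSubmodule R P =
      Submodule.span R (Set.range fun j : {i // P i} => Pi.single (j : ι) 1) := by
  apply le_antisymm
  · intro x hx
    rw [← Finset.univ_sum_single x]
    refine Submodule.sum_mem _ fun i _ => ?_
    by_cases h : P i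
    · rw [← mul_one (x i), ← smul_eq_mul, Pi.single_smul]
      exact Submodule.smul_mem _ _ (Submodule.subset_span ⟨⟨i, h⟩, rfl⟩)
    · rw [mem_coordSubmodule.mp hx i h, Pi.single_zero]
      exact Submodule.zero_mem _
  · rw [Submodule.span_le]
    rintro _ ⟨j, rfl⟩
    exact mem_coordSubmodule.mpr fun i hi => Pi.single_eq_of_ne (by rintro rfl; exact hi j.2) 1

lemma map_mulVecLin_coordSubmodule (M : Matrix ι ι R) :
    (coordSubmodule R P).map M.mulVecLin =
      Submodule.span R (Set.range fun j : {i // P i} => M.col j) := by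
  rw [coordSubmodule_eq_span, Submodule.map_span, ← Set.range_comp]
  congr 2
  funext j
  exact M.mulVec_single_one j

end CoordSubmodule

section Transitivity

variable {R K : Type*} [CommRing R] [Field K] (ρ : R →+* K) [IsLocalHom ρ]
  {ι : Type*} [Fintype ι] [DecidableEq ι] {P : ι → Prop} [DecidablePred P]
  (hρ : Surjective ρ) {t : R} (ht : t ≠ 0) (htk : ∀ a, ρ a = 0 → t * a = 0)
include hρ ht htk

lemma exists_GL_col_eq {x : {i // P i} → ι → R} (hx : LinearIndependent R x) :
    ∃ g : GL ι R, ∀ j : {i // P i}, (g : Matrix ι ι R).col j = x j := by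
  obtain ⟨b, hb⟩ := (hx.map_of_mul_ker_eq_zero ρ hρ ht htk).exists_basis_extending
    (V := ι → K) (by simp) P
  let G : Matrix ι ι R := of fun i j => if h : P j then x ⟨j, h⟩ i else surjInv hρ (b j i)
  have hG : (G.map ρ).col = b := by
    funext j i
    by_cases h : P j
    · simp [G, h, hb ⟨j, h⟩]
    · simp [G, h, surjInv_eq hρ]
  have hGu : IsUnit G := (isUnit_map_iff_of_isLocalHom ρ G).mp
    (linearIndependent_cols_iff_isUnit.mp (hG ▸ b.linearIndependent))
  exact ⟨hGu.unit, fun j => by funext i; simp [G, j.2]⟩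

lemma exists_GL_map_coordSubmodule_eq (V : Submodule R (ι → R)) [Module.Free R V]
    [Module.Finite R V] (hV : Module.finrank R V = Fintype.card {i // P i}) :
    ∃ g : GL ι R, (coordSubmodule R P).map (g : Matrix ι ι R).mulVecLin = V := by
  have := nontrivial_of_ne t 0 ht
  let b := (Module.finBasisOfFinrankEq R V hV).reindex (Fintype.equivFin _).symm
  obtain ⟨g, hg⟩ :=
    exists_GL_col_eq ρ hρ ht htk (b.linearIndependent.map' V.subtype V.ker_subtype)
  refine ⟨g, ?_⟩
  rw [map_mulVecLin_coordSubmodule, funext hg, Set.range_comp, Submodule.span_image, b.span_eq,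
    Submodule.map_subtype_top]

lemma exists_GL_map_eq (V W : Submodule R (ι → R)) [Module.Free R V] [Module.Finite R V]
    [Module.Free R W] [Module.Finite R W] (hV : Module.finrank R V = Fintype.card {i // P i})
    (hW : Module.finrank R W = Fintype.card {i // P i}) :
    ∃ g : GL ι R, V.map (g : Matrix ι ι R).mulVecLin = W := by
  obtain ⟨gV, rfl⟩ := exists_GL_map_coordSubmodule_eq ρ hρ ht htk V hV
  obtain ⟨gW, rfl⟩ := exists_GL_map_coordSubmodule_eq ρ hρ ht htk W hW
  refine ⟨gW * gV⁻¹, ?_⟩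
  rw [← Submodule.map_comp, ← mulVecLin_mul, Units.val_mul, Matrix.mul_assoc, ← Units.val_mul,
    inv_mul_cancel, Units.val_one, Matrix.mul_one]

end Transitivity

section Stabilizer

variable {R : Type*} [CommRing R]

namespace Matrix.GeneralLinearGroup

lemma card_congr {ι κ : Type*} [Fintype ι] [DecidableEq ι] [Fintype κ] [DecidableEq κ]
    (e : ι ≃ κ) : Nat.card (GL ι R) = Nat.card (GL κ R) :=
  Nat.card_congr (Units.mapEquiv (reindexAlgEquiv R R e).toMulEquiv).toEquiv

variable {α β : Type*} [Fintype α] [DecidableEq α] [Fintype β] [DecidableEq β]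

lemma isUnit_toBlocks_of_toBlocks₂₁_eq_zero {g : GL (α ⊕ β) R}
    (hg : g.val.toBlocks₂₁ = 0) : IsUnit g.val.toBlocks₁₁ ∧ IsUnit g.val.toBlocks₂₂ := by
  rw [← isUnit_fromBlocks_zero₂₁ (B := g.val.toBlocks₁₂), ← hg, fromBlocks_toBlocks]
  exact g.isUnit

noncomputable def blockTriangularEquiv :
    {g : GL (α ⊕ β) R // g.val.toBlocks₂₁ = 0} ≃ GL α R × Matrix α β R × GL β R where
  toFun g := ((isUnit_toBlocks_of_toBlocks₂₁_eq_zero g.2).1.unit, g.1.val.toBlocks₁₂,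
    (isUnit_toBlocks_of_toBlocks₂₁_eq_zero g.2).2.unit)
  invFun x :=
    ⟨(isUnit_fromBlocks_zero₂₁ (B := x.2.1).mpr ⟨x.1.isUnit, x.2.2.isUnit⟩).unit,
      toBlocks_fromBlocks₂₁ _ _ _ _⟩
  left_inv g := by
    ext : 2
    simp only [IsUnit.unit_spec]
    conv_rhs => rw [← fromBlocks_toBlocks g.1.val, g.2]
  right_inv x := by
    ext <;> simp

lemma card_toBlocks₂₁_eq_zero :
    Nat.card {g : GL (α ⊕ β) R // g.val.toBlocks₂₁ = 0} =
      Nat.card (GL α R) * Nat.card (GL β R) *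
        Nat.card R ^ (Fintype.card α * Fintype.card β) := by
  rw [Nat.card_congr blockTriangularEquiv, Nat.card_prod, Nat.card_prod]
  simp only [Matrix, Nat.card_pi, prod_const, card_univ, pow_mul]
  ring

end Matrix.GeneralLinearGroup

variable {ι : Type*} [Fintype ι] [DecidableEq ι] {P : ι → Prop} [DecidablePred P]

lemma map_mulVecLin_coordSubmodule_eq_self_iff [Finite R] (g : GL ι R) :
    (coordSubmodule R P).map (g : Matrix ι ι R).mulVecLin = coordSubmodule R P ↔
      ∀ i j, ¬P i → P j → (g : Matrix ι ι R) i j = 0 := by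
  have hle : (coordSubmodule R P).map (g : Matrix ι ι R).mulVecLin ≤ coordSubmodule R P ↔
      ∀ i j, ¬P i → P j → (g : Matrix ι ι R) i j = 0 := by
    rw [map_mulVecLin_coordSubmodule, Submodule.span_le, Set.range_subset_iff]
    simp only [SetLike.mem_coe, mem_coordSubmodule, Subtype.forall, col_apply]
    exact ⟨fun h i j hi hj => h j hj i hi, fun h j hj i hi => h i j hi hj⟩
  rw [← hle]
  refine ⟨fun h => h.le, fun h => Submodule.toAddSubgroup_injective ?_⟩
  have hinj : Injective (g : Matrix ι ι R).mulVecLin := mulVec_injective_of_isUnit g.isUnit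
  exact AddSubgroup.eq_of_le_of_card_ge h
    (Nat.card_congr (Submodule.equivMapOfInjective _ hinj _).toEquiv).le

lemma card_stabilizer_coordSubmodule [Finite R] :
    Nat.card {g : GL ι R //
        (coordSubmodule R P).map (g : Matrix ι ι R).mulVecLin = coordSubmodule R P} =
      Nat.card (GL {i // P i} R) * Nat.card (GL {i // ¬P i} R) *
        Nat.card R ^ (Fintype.card {i // P i} * Fintype.card {i // ¬P i}) := by
  rw [← GeneralLinearGroup.card_toBlocks₂₁_eq_zero]
  refine Nat.card_congr (Equiv.subtypeEquiv (Units.mapEquiv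
    (reindexAlgEquiv R R (Equiv.sumCompl P).symm).toMulEquiv).toEquiv fun g => ?_)
  rw [map_mulVecLin_coordSubmodule_eq_self_iff, ← Matrix.ext_iff]
  simp only [toBlocks₂₁, of_apply, Matrix.zero_apply, Subtype.forall]
  exact ⟨fun h i hi j hj => h i j hi hj, fun h i j hi hj => h i hi j hj⟩

lemma card_stabilizer_coordSubmodule_fin [Finite R] (n m : ℕ) :
    Nat.card {g : GL (Fin (n + m)) R //
        (coordSubmodule R fun i : Fin (n + m) => (i : ℕ) < n).map
          (g : Matrix (Fin (n + m)) (Fin (n + m)) R).mulVecLin =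
        coordSubmodule R fun i : Fin (n + m) => (i : ℕ) < n} =
      Nat.card (GL (Fin n) R) * Nat.card (GL (Fin m) R) * Nat.card R ^ (n * m) := by
  have hn : Fintype.card {i : Fin (n + m) // (i : ℕ) < n} = n :=
    Fintype.card_fin_lt_of_le (by omega)
  have hm : Fintype.card {i : Fin (n + m) // ¬(i : ℕ) < n} = m := by
    rw [Fintype.card_subtype_compl, hn, Fintype.card_fin, Nat.add_sub_cancel_left]
  rw [card_stabilizer_coordSubmodule,
    GeneralLinearGroup.card_congr (Fintype.equivFinOfCardEq hn),
    GeneralLinearGroup.card_congr (Fintype.equivFinOfCardEq hm), hn, hm]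

end Stabilizer

section DedekindDomain

variable {O : Type*} [CommRing O] [IsDedekindDomain O] {p : Ideal O} [p.IsPrime] (hp0 : p ≠ ⊥)
include hp0

lemma Ideal.exists_ne_zero_mul_eq_zero_of_factor_pow_eq_zero {r : ℕ} (hr : r ≠ 0) :
    ∃ t : O ⧸ p ^ r, t ≠ 0 ∧
      ∀ a, Ideal.Quotient.factor (Ideal.pow_le_self hr : p ^ r ≤ p) a = 0 → t * a = 0 := by
  obtain ⟨x, hx, hxr⟩ := SetLike.exists_of_lt (Ideal.pow_succ_lt_pow hp0 (r - 1))
  rw [Nat.sub_add_cancel (Nat.pos_of_ne_zero hr)] at hxr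
  refine ⟨Ideal.Quotient.mk _ x, by rwa [Ne, Ideal.Quotient.eq_zero_iff_mem], fun a ha => ?_⟩
  obtain ⟨y, rfl⟩ := Ideal.Quotient.mk_surjective a
  rw [Ideal.Quotient.factor_mk, Ideal.Quotient.eq_zero_iff_mem] at ha
  rw [← map_mul, Ideal.Quotient.eq_zero_iff_mem]
  simpa [← pow_succ, Nat.sub_add_cancel (Nat.pos_of_ne_zero hr)] using Ideal.mul_mem_mul hx ha

lemma Ideal.card_quotient_pow (r : ℕ) : Nat.card (O ⧸ p ^ r) = Nat.card (O ⧸ p) ^ r := by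
  simpa only [Submodule.cardQuot_apply] using cardQuot_pow_of_prime hp0 (i := r)

lemma Ideal.card_ker_factor_pow [Finite (O ⧸ p)] {r : ℕ} (hr : r ≠ 0) :
    Nat.card (RingHom.ker (Ideal.Quotient.factor (Ideal.pow_le_self hr : p ^ r ≤ p))) =
      Nat.card (O ⧸ p) ^ (r - 1) := by
  have h := RingHom.card_ker_mul_card_of_surjective _ (Ideal.Quotient.factor_surjective
    (Ideal.pow_le_self hr : p ^ r ≤ p))
  rw [Ideal.card_quotient_pow hp0, ← pow_sub_one_mul hr (Nat.card (O ⧸ p))] at h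
  exact Nat.eq_of_mul_eq_mul_right Nat.card_pos h

end DedekindDomain

theorem GL_transitive_on_free_submodules_general
    (O : Type*) [CommRing O] [IsDedekindDomain O]
    (p : Ideal O) (hp : p.IsPrime) (hp0 : p ≠ ⊥) (r : ℕ) (hr : 1 ≤ r) (d n : ℕ)
    (hn : n ≤ d) [Finite (O ⧸ p)] (q : ℕ) (hq : Nat.card (O ⧸ p) = q) :
    (∀ V W : Submodule (O ⧸ p ^ r) (Fin d → O ⧸ p ^ r),
      (Module.Free (O ⧸ p ^ r) V ∧ Module.finrank (O ⧸ p ^ r) V = n) →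
      (Module.Free (O ⧸ p ^ r) W ∧ Module.finrank (O ⧸ p ^ r) W = n) →
      ∃ g : GL (Fin d) (O ⧸ p ^ r),
        Submodule.map (Matrix.mulVecLin (g : Matrix (Fin d) (Fin d) (O ⧸ p ^ r))) V = W) ∧
    (Nat.card {g : GL (Fin d) (O ⧸ p ^ r) //
        Submodule.map (Matrix.mulVecLin (g : Matrix (Fin d) (Fin d) (O ⧸ p ^ r)))
          (Submodule.pi Set.univ
            (fun i : Fin d => if (i : ℕ) < n then (⊤ : Submodule (O ⧸ p ^ r) (O ⧸ p ^ r)) else ⊥)) =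
          Submodule.pi Set.univ
            (fun i : Fin d => if (i : ℕ) < n then (⊤ : Submodule (O ⧸ p ^ r) (O ⧸ p ^ r)) else ⊥)} *
      (gaussBinomial q d n * q ^ ((r - 1) * n * (d - n))) =
      Nat.card (GL (Fin d) (O ⧸ p ^ r))) := by
  have hr0 : r ≠ 0 := by omega
  have := hp.isMaximal hp0
  let _ : Field (O ⧸ p) := Ideal.Quotient.field p
  have hρ := Ideal.Quotient.factor_surjective (Ideal.pow_le_self hr0 : p ^ r ≤ p)
  have := Ideal.Quotient.isLocalHom_factor_pow p hr0
  have : Finite (O ⧸ p ^ r) := Nat.finite_of_card_ne_zero <| by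
    rw [Ideal.card_quotient_pow hp0]
    exact (pow_pos Nat.card_pos r).ne'
  obtain ⟨m, rfl⟩ := Nat.exists_eq_add_of_le hn
  refine ⟨fun V W ⟨_, hV⟩ ⟨_, hW⟩ => ?_, ?_⟩
  · obtain ⟨t, ht, htk⟩ := Ideal.exists_ne_zero_mul_eq_zero_of_factor_pow_eq_zero hp0 hr0
    have hP := Fintype.card_fin_lt_of_le hn
    exact exists_GL_map_eq (Ideal.Quotient.factor (Ideal.pow_le_self hr0)) hρ ht htk V W
      (hV.trans hP.symm) (hW.trans hP.symm)
  · rw [Nat.add_sub_cancel_left, card_stabilizer_coordSubmodule_fin n m]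
    simp only [GeneralLinearGroup.card_eq_card_ker_pow_mul _ hρ, Fintype.card_fin,
      Ideal.card_ker_factor_pow hp0 hr0, card_GL_field_add, Ideal.card_quotient_pow hp0, hq]
    obtain ⟨s, rfl⟩ : ∃ s, r = s + 1 := ⟨r - 1, by omega⟩
    simp only [Nat.add_sub_cancel]
    ring

/-- `GL_d(O_r)` acts transitively on the free rank-`n` submodules of `O_r^d`, and the
stabilizer of the standard submodule `⟨e_1,…,e_n⟩` has index `(d choose n)_q · q^{(r-1)n(d-n)}`
(stated as: card of stabilizer times the index equals the card of the group). -/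
theorem GL_transitive_on_free_submodules
    (O : Type*) [CommRing O] [IsDomain O] [IsDedekindDomain O]
    (p : Ideal O) (hp : p.IsPrime) (hp0 : p ≠ ⊥) (r : ℕ) (hr : 1 ≤ r) (d n : ℕ)
    (hn : n ≤ d) [Finite (O ⧸ p)] (q : ℕ) (hq : Nat.card (O ⧸ p) = q) :
    (∀ V W : Submodule (O ⧸ p ^ r) (Fin d → O ⧸ p ^ r),
      (Module.Free (O ⧸ p ^ r) V ∧ Module.finrank (O ⧸ p ^ r) V = n) →
      (Module.Free (O ⧸ p ^ r) W ∧ Module.finrank (O ⧸ p ^ r) W = n) →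
      ∃ g : GL (Fin d) (O ⧸ p ^ r),
        Submodule.map (Matrix.mulVecLin (g : Matrix (Fin d) (Fin d) (O ⧸ p ^ r))) V = W) ∧
    (Nat.card {g : GL (Fin d) (O ⧸ p ^ r) //
        Submodule.map (Matrix.mulVecLin (g : Matrix (Fin d) (Fin d) (O ⧸ p ^ r)))
          (Submodule.pi Set.univ
            (fun i : Fin d => if (i : ℕ) < n then (⊤ : Submodule (O ⧸ p ^ r) (O ⧸ p ^ r)) else ⊥)) =
          Submodule.pi Set.univ
            (fun i : Fin d => if (i : ℕ) < n then (⊤ : Submodule (O ⧸ p ^ r) (O ⧸ p ^ r)) else ⊥)} *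
      (gaussBinomial q d n * q ^ ((r - 1) * n * (d - n))) =
      Nat.card (GL (Fin d) (O ⧸ p ^ r))) :=
  GL_transitive_on_free_submodules_general O p hp hp0 r hr d n hn q hq
end

section
/- Let V ≤ O_r^d and n < d. Then exactly one of the following holds: (1) V is not generated by n elements, and V is contained in no free rank-n submodule; (2) V is free of rank n, and is contained in exactly one free rank-n submodule (itself); (3) V is generated by n elements but is not free of rank n, and is contained in at least two distinct free rank-n submodules of O_r^d. -/
/-!
In `O ⧸ p ^ r` divisibility is total (its ideals are the images of the `p ^ i`), so every finite
family `s` in a free module has a Smith normal form: `span s = span {c i • f i}` for some basis `f`,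
with `c i = 0` beyond the length of `s`. Hence a submodule of a free module of rank `n` is
generated by `n` elements, which is (1). For (2), the ring is Artinian, so the injective
endomorphism `W ≃ V ↪ W` is onto. For (3), if `V = span {c k • f k}_{k < n}` is not free of rank
`n`, some `c j` is not a unit, hence is killed by some `a ≠ 0`; the transvection
`x ↦ x + a x_j f_n` fixes `V` but moves `span {f k}_{k < n}` to a second free overmodule.
-/

open Submodule Set Module

section FreeOvermodules

variable {R M : Type*} [CommRing R] [AddCommGroup M] [Module R M]

theorem PreValuationRing.exists_dvd_forall [PreValuationRing R] {ι : Type*} [Finite ι]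
    [Nonempty ι] (f : ι → R) : ∃ i, ∀ j, f i ∣ f j := by
  obtain ⟨i, -, hi⟩ :=
    Set.finite_univ.exists_maximalFor (fun i => Ideal.span {f i}) univ univ_nonempty
  refine ⟨i, fun j => (ValuationRing.dvd_total (f i) (f j)).elim id fun hji => ?_⟩
  simp only [Ideal.span_singleton_le_span_singleton] at hi
  exact hi (mem_univ j) hji

namespace Module.Basis

noncomputable def kerCoord {d : ℕ} (b : Basis (Fin (d + 1)) R M) (j : Fin (d + 1)) :
    Basis (Fin d) R (LinearMap.ker (b.coord j)) :=
  (Basis.span (b.linearIndependent.comp _ (Fin.succAbove_right_injective (p := j)))).map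
    (LinearEquiv.ofEq _ _ <| by
      ext x
      rw [range_comp, Fin.range_succAbove, b.mem_span_image, LinearMap.mem_ker, b.coord_apply,
        Finsupp.support_subset_iff]
      simp only [mem_compl_iff, mem_singleton_iff, not_not, forall_eq])

noncomputable def finConsOfKer {d : ℕ} (φ : M →ₗ[R] R) {w : M} (hw : φ w = 1)
    (f : Basis (Fin d) R (LinearMap.ker φ)) : Basis (Fin (d + 1)) R M :=
  .mkFinCons w f (fun c x hx h => by simpa [LinearMap.mem_ker.mp hx, hw] using congrArg φ h)
    fun z => ⟨-φ z, by simp [hw]⟩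

theorem coe_finConsOfKer {d : ℕ} (φ : M →ₗ[R] R) {w : M} (hw : φ w = 1)
    (f : Basis (Fin d) R (LinearMap.ker φ)) :
    ⇑(finConsOfKer φ hw f) = Fin.cons w ((↑) ∘ f) :=
  Basis.coe_mkFinCons _ _ _ _

theorem exists_repr_eq_one_smul_eq {ι : Type*} [Finite ι] [DecidableEq ι]
    (b : Basis ι R M) {v : M} {j : ι} (h : ∀ i, b.repr v j ∣ b.repr v i) :
    ∃ w, b.repr w j = 1 ∧ b.repr v j • w = v := by
  choose e he using h
  set w := b.equivFun.symm (Function.update e j 1)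
  have hw (i : ι) : b.repr w i = Function.update e j 1 i := by simp [w, ← b.equivFun_apply]
  refine ⟨w, by simp [hw], b.ext_elem fun i => ?_⟩
  rcases eq_or_ne i j with rfl | hij
  · simp [hw]
  · simp [hw, hij, ← he]

end Module.Basis

theorem Submodule.span_range_eq_span_insert_sub {m : ℕ} (s : Fin (m + 1) → M) (i : Fin (m + 1))
    (c : Fin m → R) :
    span R (range s) = span R (insert (s i) (range fun k => s (i.succAbove k) - c k • s i)) := by
  apply le_antisymm
  · rw [span_le]
    rintro _ ⟨l, rfl⟩
    obtain rfl | ⟨k, rfl⟩ := Fin.eq_self_or_eq_succAbove i l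
    · exact subset_span (mem_insert _ _)
    · rw [← sub_add_cancel (s (i.succAbove k)) (c k • s i)]
      exact add_mem (subset_span (mem_insert_of_mem _ ⟨k, rfl⟩))
        (smul_mem _ _ (subset_span (mem_insert _ _)))
  · rw [span_le, insert_subset_iff]
    refine ⟨subset_span ⟨i, rfl⟩, ?_⟩
    rintro _ ⟨k, rfl⟩
    exact sub_mem (subset_span ⟨_, rfl⟩) (smul_mem _ _ (subset_span ⟨i, rfl⟩))

theorem Module.Basis.exists_span_range_eq_span_range_smul [PreValuationRing R] {d : ℕ}
    (b : Basis (Fin d) R M) {m : ℕ} (s : Fin m → M) :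
    ∃ (f : Basis (Fin d) R M) (c : Fin d → R), (∀ i : Fin d, m ≤ i → c i = 0) ∧
      span R (range s) = span R (range fun i => c i • f i) := by
  classical
  induction m generalizing d M with
  | zero => exact ⟨b, 0, fun _ _ => rfl, by simp [eq_comm (a := (⊥ : Submodule R M))]⟩
  | succ m ih =>
    rcases d with _ | d
    · have : Subsingleton M := b.repr.toEquiv.subsingleton
      exact ⟨b, 0, fun _ _ => rfl, Subsingleton.elim _ _⟩
    -- Pivot on an entry dividing all others, then clear its column from the other rows.
    obtain ⟨⟨i₀, j₀⟩, hpiv⟩ := PreValuationRing.exists_dvd_forall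
      fun q : Fin (m + 1) × Fin (d + 1) => b.repr (s q.1) q.2
    obtain ⟨w, hw, hsw⟩ := b.exists_repr_eq_one_smul_eq fun j => hpiv (i₀, j)
    replace hw : b.coord j₀ w = 1 := hw
    choose c hc using fun k => hpiv (i₀.succAbove k, j₀)
    let t (k : Fin m) : LinearMap.ker (b.coord j₀) :=
      ⟨s (i₀.succAbove k) - c k • s i₀, by simp [hc, mul_comm]⟩
    obtain ⟨f, a, ha, hspan⟩ := ih (b.kerCoord j₀) t
    refine ⟨.finConsOfKer (b.coord j₀) hw f, Fin.cons (b.repr (s i₀) j₀) a, fun i hi => ?_, ?_⟩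
    · cases i using Fin.cases with
      | zero => simp at hi
      | succ k => exact ha k (by simpa using hi)
    · have hrange : (range fun i => (Fin.cons (b.repr (s i₀) j₀) a : Fin (d + 1) → R) i •
          Basis.finConsOfKer (b.coord j₀) hw f i) =
          insert (b.repr (s i₀) j₀ • w) (range fun k => a k • (f k : M)) := by
        rw [Basis.coe_finConsOfKer, ← Fin.range_cons]
        congr 1
        ext i
        cases i using Fin.cases <;> simp
      have hmap := congrArg (map (LinearMap.ker (b.coord j₀)).subtype) hspan
      simp only [map_span, ← range_comp] at hmap
      rw [span_range_eq_span_insert_sub s i₀ c, hrange, hsw, span_insert, span_insert]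
      exact congrArg _ hmap

theorem Module.Basis.exists_span_range_eq_of_fg [PreValuationRing R] {n : ℕ}
    (b : Basis (Fin n) R M) {V : Submodule R M} (hV : V.FG) :
    ∃ s : Fin n → M, span R (range s) = V := by
  obtain ⟨m, s, rfl⟩ := fg_iff_exists_fin_generating_family.mp hV
  obtain ⟨f, c, -, h⟩ := b.exists_span_range_eq_span_range_smul s
  exact ⟨_, h.symm⟩

theorem IsArtinianRing.exists_ne_zero_mul_eq_zero [IsArtinianRing R] {x : R} (hx : ¬IsUnit x) :
    ∃ a ≠ 0, a * x = 0 := by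
  rw [isUnit_iff_mem_nonZeroDivisors, notMem_nonZeroDivisors_iff] at hx
  obtain ⟨a, hxa, ha⟩ | ⟨a, hax, ha⟩ := hx
  · exact ⟨a, ha, by rwa [mul_comm]⟩
  · exact ⟨a, ha, hax⟩

theorem Submodule.free_and_finrank_span_eq_card [Nontrivial R] {ι : Type*} [Fintype ι]
    {g : ι → M} (hg : LinearIndependent R g) :
    Module.Free R (span R (range g)) ∧ finrank R (span R (range g)) = Fintype.card ι :=
  ⟨.of_basis (Basis.span hg), finrank_span_eq_card hg⟩

theorem Submodule.span_range_eq_span_range_comp_castLE {d n : ℕ} (h : n ≤ d) {v : Fin d → M}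
    (hv : ∀ i : Fin d, n ≤ i → v i = 0) :
    span R (range v) = span R (range (v ∘ Fin.castLE h)) := by
  refine le_antisymm (span_le.mpr ?_) (span_mono (range_comp_subset_range _ _))
  rintro _ ⟨i, rfl⟩
  by_cases hi : (i : ℕ) < n
  · exact subset_span ⟨⟨i, hi⟩, rfl⟩
  · rw [hv i (not_lt.mp hi)]
    exact zero_mem _

def Submodule.freeOvermodules (V : Submodule R M) (n : ℕ) : Set (Submodule R M) :=
  {W | (Module.Free R W ∧ finrank R W = n) ∧ V ≤ W}

theorem Submodule.exists_span_range_eq_of_mem_freeOvermodules [PreValuationRing R]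
    [Nontrivial R] [IsNoetherian R M] {V W : Submodule R M} {n : ℕ} (hW : W ∈ V.freeOvermodules n) :
    ∃ s : Fin n → M, span R (range s) = V := by
  obtain ⟨⟨_, hWn⟩, hVW⟩ := hW
  obtain ⟨s, hs⟩ := (finBasisOfFinrankEq R W hWn).exists_span_range_eq_of_fg
    (IsNoetherian.noetherian (V.comap W.subtype))
  refine ⟨W.subtype ∘ s, ?_⟩
  rw [range_comp, ← map_span, hs, map_comap_subtype, inf_eq_right.mpr hVW]

theorem Submodule.freeOvermodules_eq_singleton [IsArtinianRing R] [Nontrivial R]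
    [Module.Finite R M] {V : Submodule R M} {n : ℕ} (hV : Module.Free R V ∧ finrank R V = n) :
    V.freeOvermodules n = {V} := by
  refine Set.eq_singleton_iff_unique_mem.mpr ⟨⟨hV, le_rfl⟩, fun W ⟨⟨_, hWn⟩, hVW⟩ => ?_⟩
  have := hV.1
  let e : W ≃ₗ[R] V := LinearEquiv.ofFinrankEq W V (hWn.trans hV.2.symm)
  have hsurj := IsArtinian.surjective_of_injective_endomorphism (inclusion hVW ∘ₗ e.toLinearMap)
    ((inclusion_injective hVW).comp e.injective)
  refine (le_antisymm hVW fun x hx => ?_).symm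
  obtain ⟨y, hy⟩ := hsurj ⟨x, hx⟩
  have hxy : ((e y : V) : M) = x := congrArg Subtype.val hy
  exact hxy ▸ (e y).2

theorem Module.Basis.freeOvermodules_nontrivial_of_not_isUnit [IsArtinianRing R] [Nontrivial R]
    {d n : ℕ} (f : Basis (Fin d) R M) (hn : n < d) (c : Fin n → R) {j : Fin n}
    (hj : ¬IsUnit (c j)) :
    (span R (range fun k => c k • f (Fin.castLE hn.le k))).freeOvermodules n |>.Nontrivial := by
  classical
  obtain ⟨a, ha0, hac⟩ := IsArtinianRing.exists_ne_zero_mul_eq_zero hj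
  set g := f ∘ Fin.castLE hn.le
  let i₀ : Fin d := ⟨n, hn⟩
  have hne (k : Fin n) : Fin.castLE hn.le k ≠ i₀ := Fin.ne_of_val_ne (by simp [i₀, k.isLt.ne])
  have hφ : (a • f.coord (Fin.castLE hn.le j)) (f i₀) = 0 := by simp [(hne j).symm]
  let T := LinearEquiv.transvection hφ
  have hT (x : M) : T x = x + (a * f.repr x (Fin.castLE hn.le j)) • f i₀ := rfl
  have hg : LinearIndependent R g := f.linearIndependent.comp _ (Fin.castLE_injective _)
  refine ⟨span R (range g), ⟨?_, ?_⟩, span R (range (T ∘ g)), ⟨?_, ?_⟩, fun h => ?_⟩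
  · simpa using free_and_finrank_span_eq_card hg
  · exact span_le.mpr <| range_subset_iff.mpr fun k =>
      smul_mem _ _ (subset_span (mem_range_self k))
  · simpa using free_and_finrank_span_eq_card (hg.map' T.toLinearMap T.ker)
  · refine span_le.mpr (range_subset_iff.mpr fun k => show c k • g k ∈ _ from ?_)
    have hfix : c k • g k = c k • T (g k) := by
      rw [← map_smul, hT]
      rcases eq_or_ne k j with rfl | hkj
      · simp [g, hac]
      · simp [g, hkj]
    rw [hfix]
    exact smul_mem _ _ (subset_span ⟨k, rfl⟩)
  · have hker : span R (range g) ≤ LinearMap.ker (f.coord i₀) :=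
      span_le.mpr (range_subset_iff.mpr fun k => by simp [g, hne k])
    have hTg : T (g j) ∈ span R (range g) := h ▸ subset_span ⟨j, rfl⟩
    exact ha0 (by simpa [g, hT, hne j] using hker hTg)

theorem Module.Basis.freeOvermodules_nontrivial [PreValuationRing R] [IsArtinianRing R]
    [Nontrivial R] {d n : ℕ} (b : Basis (Fin d) R M) (hn : n < d) (s : Fin n → M)
    (hs : ¬(Module.Free R (span R (range s)) ∧ finrank R (span R (range s)) = n)) :
    ((span R (range s)).freeOvermodules n).Nontrivial := by
  obtain ⟨f, c, hc, hV⟩ := b.exists_span_range_eq_span_range_smul s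
  rw [hV, span_range_eq_span_range_comp_castLE hn.le fun i hi => by simp [hc i hi]] at hs ⊢
  by_cases hu : ∀ k : Fin n, IsUnit (c (Fin.castLE hn.le k))
  · choose u hu using hu
    have hcu : (fun i => c i • f i) ∘ Fin.castLE hn.le = u • (f ∘ Fin.castLE hn.le) :=
      funext fun k => by simp [← hu k, Units.smul_def]
    rw [hcu] at hs
    refine absurd ?_ hs
    simpa using free_and_finrank_span_eq_card
      ((f.linearIndependent.comp _ (Fin.castLE_injective hn.le)).units_smul u)
  · obtain ⟨j, hj⟩ := not_forall.mp hu
    exact f.freeOvermodules_nontrivial_of_not_isUnit hn _ hj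

end FreeOvermodules

section DedekindQuotient

variable {O : Type*} [CommRing O] [IsDedekindDomain O]

theorem Ideal.exists_eq_pow_of_pow_le {p : Ideal O} (hp : p.IsPrime) (hp0 : p ≠ ⊥) {r : ℕ}
    {I : Ideal O} (hI : p ^ r ≤ I) : ∃ i, I = p ^ i := by
  obtain ⟨i, -, hi⟩ :=
    (dvd_prime_pow (Ideal.prime_of_isPrime hp0 hp) r).mp (Ideal.dvd_iff_le.mpr hI)
  exact ⟨i, associated_iff_eq.mp hi⟩

theorem preValuationRing_quotient_pow {p : Ideal O} (hp : p.IsPrime) (hp0 : p ≠ ⊥) (r : ℕ) :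
    PreValuationRing (O ⧸ p ^ r) := by
  refine PreValuationRing.iff_ideal_total.mpr ⟨fun I J => ?_⟩
  have hle (K : Ideal (O ⧸ p ^ r)) : p ^ r ≤ K.comap (Ideal.Quotient.mk _) := by
    simpa using Ideal.ker_le_comap (Ideal.Quotient.mk (p ^ r)) (K := K)
  obtain ⟨i, hI⟩ := Ideal.exists_eq_pow_of_pow_le hp hp0 (hle I)
  obtain ⟨k, hJ⟩ := Ideal.exists_eq_pow_of_pow_le hp hp0 (hle J)
  simp_rw [← Ideal.comap_le_comap_iff_of_surjective _ Ideal.Quotient.mk_surjective, hI, hJ]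
  exact (le_total k i).imp Ideal.pow_le_pow_right Ideal.pow_le_pow_right

theorem isArtinianRing_quotient_of_ne_bot {I : Ideal O} (hI : I ≠ ⊥) :
    IsArtinianRing (O ⧸ I) := by
  have : Ring.KrullDimLE 0 (O ⧸ I) :=
    Ideal.krullDimLE_zero_quotient_iff_forall_minimalPrimes_isMaximal.mpr fun J hJ =>
      hJ.1.1.isMaximal (ne_bot_of_le_ne_bot hI hJ.1.2)
  exact IsNoetherianRing.isArtinianRing_of_krullDimLE_zero

end DedekindQuotient

theorem trichotomy_free_overmodules_general
    (O : Type*) [CommRing O] [IsDedekindDomain O]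
    (p : Ideal O) (hp : p.IsPrime) (hp0 : p ≠ ⊥) (r : ℕ) (hr : 1 ≤ r) (d n : ℕ)
    (hn : n < d) (V : Submodule (O ⧸ p ^ r) (Fin d → O ⧸ p ^ r)) :
    ((¬ ∃ s : Fin n → (Fin d → O ⧸ p ^ r),
        Submodule.span (O ⧸ p ^ r) (Set.range s) = V) →
      {W : Submodule (O ⧸ p ^ r) (Fin d → O ⧸ p ^ r) |
        (Module.Free (O ⧸ p ^ r) W ∧ Module.finrank (O ⧸ p ^ r) W = n) ∧ V ≤ W} = ∅) ∧
    ((Module.Free (O ⧸ p ^ r) V ∧ Module.finrank (O ⧸ p ^ r) V = n) →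
      {W : Submodule (O ⧸ p ^ r) (Fin d → O ⧸ p ^ r) |
        (Module.Free (O ⧸ p ^ r) W ∧ Module.finrank (O ⧸ p ^ r) W = n) ∧ V ≤ W} = {V}) ∧
    (((∃ s : Fin n → (Fin d → O ⧸ p ^ r),
        Submodule.span (O ⧸ p ^ r) (Set.range s) = V) ∧
      ¬ (Module.Free (O ⧸ p ^ r) V ∧ Module.finrank (O ⧸ p ^ r) V = n)) →
      ∃ W₁ W₂ : Submodule (O ⧸ p ^ r) (Fin d → O ⧸ p ^ r), W₁ ≠ W₂ ∧
        W₁ ∈ {W : Submodule (O ⧸ p ^ r) (Fin d → O ⧸ p ^ r) |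
          (Module.Free (O ⧸ p ^ r) W ∧ Module.finrank (O ⧸ p ^ r) W = n) ∧ V ≤ W} ∧
        W₂ ∈ {W : Submodule (O ⧸ p ^ r) (Fin d → O ⧸ p ^ r) |
          (Module.Free (O ⧸ p ^ r) W ∧ Module.finrank (O ⧸ p ^ r) W = n) ∧ V ≤ W}) := by
  have : Nontrivial (O ⧸ p ^ r) := Ideal.Quotient.nontrivial_iff.mpr fun h =>
    hp.ne_top (top_le_iff.mp (h ▸ Ideal.pow_le_self (by omega)))
  have : IsArtinianRing (O ⧸ p ^ r) := isArtinianRing_quotient_of_ne_bot (pow_ne_zero r hp0)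
  have : PreValuationRing (O ⧸ p ^ r) := preValuationRing_quotient_pow hp hp0 r
  refine ⟨fun hV => Set.eq_empty_of_forall_notMem fun W hW =>
    hV (exists_span_range_eq_of_mem_freeOvermodules hW), freeOvermodules_eq_singleton,
    fun ⟨⟨s, hs⟩, hV⟩ => ?_⟩
  subst hs
  obtain ⟨W₁, h₁, W₂, h₂, hne⟩ := (Pi.basisFun _ (Fin d)).freeOvermodules_nontrivial hn s hV
  exact ⟨W₁, W₂, hne, h₁, h₂⟩

/-- Trichotomy: for `V ≤ O_r^d` and `n < d`, letting `C` be the set of free rank-`n`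
submodules containing `V`: if `V` is not `n`-generated then `C = ∅`; if `V` is free of
rank `n` then `C = {V}`; and if `V` is `n`-generated but not free of rank `n` then `C`
contains at least two distinct elements.  (These three cases are mutually exclusive and
exhaustive, so exactly one of them holds.) -/
theorem trichotomy_free_overmodules
    (O : Type*) [CommRing O] [IsDomain O] [IsDedekindDomain O]
    (p : Ideal O) (hp : p.IsPrime) (hp0 : p ≠ ⊥) (r : ℕ) (hr : 1 ≤ r) (d n : ℕ)
    (hn : n < d) (V : Submodule (O ⧸ p ^ r) (Fin d → O ⧸ p ^ r)) :
    ((¬ ∃ s : Fin n → (Fin d → O ⧸ p ^ r),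
        Submodule.span (O ⧸ p ^ r) (Set.range s) = V) →
      {W : Submodule (O ⧸ p ^ r) (Fin d → O ⧸ p ^ r) |
        (Module.Free (O ⧸ p ^ r) W ∧ Module.finrank (O ⧸ p ^ r) W = n) ∧ V ≤ W} = ∅) ∧
    ((Module.Free (O ⧸ p ^ r) V ∧ Module.finrank (O ⧸ p ^ r) V = n) →
      {W : Submodule (O ⧸ p ^ r) (Fin d → O ⧸ p ^ r) |
        (Module.Free (O ⧸ p ^ r) W ∧ Module.finrank (O ⧸ p ^ r) W = n) ∧ V ≤ W} = {V}) ∧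
    (((∃ s : Fin n → (Fin d → O ⧸ p ^ r),
        Submodule.span (O ⧸ p ^ r) (Set.range s) = V) ∧
      ¬ (Module.Free (O ⧸ p ^ r) V ∧ Module.finrank (O ⧸ p ^ r) V = n)) →
      ∃ W₁ W₂ : Submodule (O ⧸ p ^ r) (Fin d → O ⧸ p ^ r), W₁ ≠ W₂ ∧
        W₁ ∈ {W : Submodule (O ⧸ p ^ r) (Fin d → O ⧸ p ^ r) |
          (Module.Free (O ⧸ p ^ r) W ∧ Module.finrank (O ⧸ p ^ r) W = n) ∧ V ≤ W} ∧
        W₂ ∈ {W : Submodule (O ⧸ p ^ r) (Fin d → O ⧸ p ^ r) |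
          (Module.Free (O ⧸ p ^ r) W ∧ Module.finrank (O ⧸ p ^ r) W = n) ∧ V ≤ W}) :=
  trichotomy_free_overmodules_general O p hp hp0 r hr d n hn V
end

section
/- If M ≤ O_r^d is of type (m; k_1,...,k_t), then the orthogonal complement M^⊥ = {w ∈ O_r^d : ⟨v,w⟩ = 0 for all v ∈ M} with respect to the standard bilinear form is of type (d-m-t; r-k_t,..., r-k_1). -/
/-!
Choose `g` with `g M = ∏ pᵉⁱ/pʳ`. The inverse transpose of `g` carries `M^⊥` onto `(g M)^⊥`, and
the orthogonal complement of a product of ideals of `O/pʳ` is the product of their annihilators.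
Since nonzero ideals of a Dedekind domain cancel, the annihilator of `pᵉ/pʳ` is `pʳ⁻ᵉ/pʳ`.
Reversing the coordinates puts the exponents `r - eᵢ` in increasing order.
-/

open Finset

/-- The standard bilinear form `⟨v,w⟩ = Σ i, v i * w i` on `R^d`. -/
def stdBilin (R : Type*) [CommRing R] (d : ℕ) :
    LinearMap.BilinForm R (Fin d → R) :=
  LinearMap.mk₂ R (fun v w => ∑ i, v i * w i)
    (by intro m₁ m₂ n; simp [add_mul, Finset.sum_add_distrib])
    (by intro c m n; simp [Finset.mul_sum, mul_assoc])
    (by intro m n₁ n₂; simp [mul_add, Finset.sum_add_distrib])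
    (by intro c m n; simp [Finset.mul_sum, mul_comm, mul_left_comm])

open LinearMap (BilinForm IsAdjointPair)
open scoped Matrix

theorem LinearMap.BilinForm.orthogonal_map_of_isAdjointPair {R M : Type*} [CommRing R]
    [AddCommGroup M] [Module R M] (B : BilinForm R M) {f g : M →ₗ[R] M}
    (h : IsAdjointPair B B f g) (N : Submodule R M) :
    B.orthogonal (N.map f) = (B.orthogonal N).comap g := by
  ext x
  simp only [BilinForm.mem_orthogonal_iff, Submodule.mem_comap, Submodule.mem_map,
    forall_exists_index, and_imp, forall_apply_eq_imp_iff₂, h _ x]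

theorem Submodule.map_funCongrLeft_pi {R M ι κ : Type*} [Semiring R] [AddCommMonoid M]
    [Module R M] (e : ι ≃ κ) (I : κ → Submodule R M) :
    (Submodule.pi Set.univ I).map (LinearEquiv.funCongrLeft R M e : (κ → M) →ₗ[R] ι → M) =
      Submodule.pi Set.univ fun i => I (e i) := by
  ext y
  simp only [Submodule.mem_map_equiv, Submodule.mem_pi, Set.mem_univ, true_implies,
    LinearEquiv.funCongrLeft_symm, LinearEquiv.funCongrLeft_apply, LinearMap.funLeft_apply]
  exact ⟨fun h i => by simpa using h (e i), fun h k => by simpa using h (e.symm k)⟩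

section stdBilin

variable {R : Type*} [CommRing R] {d : ℕ}

theorem stdBilin_eq_dotProduct (v w : Fin d → R) : stdBilin R d v w = v ⬝ᵥ w := rfl

theorem orthogonal_stdBilin_pi (I : Fin d → Submodule R R) :
    (stdBilin R d).orthogonal (Submodule.pi Set.univ I) =
      Submodule.pi Set.univ fun i => (I i).annihilator := by
  classical
  ext w
  simp only [BilinForm.mem_orthogonal_iff, Submodule.mem_pi, Set.mem_univ,
    true_implies, Submodule.mem_annihilator, smul_eq_mul, stdBilin_eq_dotProduct]
  constructor
  · intro h i a ha
    have := h (Pi.single i a) fun j => by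
      rcases eq_or_ne j i with rfl | hj
      · simpa using ha
      · simp [hj]
    rwa [single_dotProduct, mul_comm] at this
  · intro h v hv
    exact Finset.sum_eq_zero fun i _ => by rw [mul_comm]; exact h i _ (hv i)

theorem isAdjointPair_stdBilin_toLin' (A : Matrix (Fin d) (Fin d) R) :
    IsAdjointPair (stdBilin R d) (stdBilin R d) (Matrix.toLin' A) (Matrix.toLin' Aᵀ) := by
  intro v w
  simp only [stdBilin_eq_dotProduct, Matrix.toLin'_apply, Matrix.dotProduct_mulVec,
    Matrix.vecMul_transpose]

noncomputable def transposeEquiv (f : (Fin d → R) ≃ₗ[R] (Fin d → R)) :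
    (Fin d → R) ≃ₗ[R] (Fin d → R) :=
  LinearEquiv.ofLinearMap
    (Matrix.toLin' (LinearMap.toMatrix' (f : (Fin d → R) →ₗ[R] (Fin d → R)))ᵀ)
    (Matrix.toLin' (LinearMap.toMatrix' (f.symm : (Fin d → R) →ₗ[R] (Fin d → R)))ᵀ)
    (by
      rw [← Matrix.toLin'_mul, ← Matrix.transpose_mul, ← LinearMap.toMatrix'_comp]
      simp)
    (by
      rw [← Matrix.toLin'_mul, ← Matrix.transpose_mul, ← LinearMap.toMatrix'_comp]
      simp)

theorem isAdjointPair_transposeEquiv (f : (Fin d → R) ≃ₗ[R] (Fin d → R)) :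
    IsAdjointPair (stdBilin R d) (stdBilin R d) f (transposeEquiv f) := by
  have := isAdjointPair_stdBilin_toLin' (LinearMap.toMatrix' (f : (Fin d → R) →ₗ[R] (Fin d → R)))
  rwa [Matrix.toLin'_toMatrix'] at this

end stdBilin

theorem Ideal.annihilator_map_mk_of_mul_eq {O : Type*} [CommRing O] [IsDedekindDomain O]
    {I J K : Ideal O} (hJ : J ≠ ⊥) (hJK : J * K = I) :
    Submodule.annihilator (J.map (Ideal.Quotient.mk I)) = K.map (Ideal.Quotient.mk I) := by
  ext x
  obtain ⟨y, rfl⟩ := Ideal.Quotient.mk_surjective x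
  rw [Ideal.mem_quotient_iff_mem (hJK ▸ Ideal.mul_le_right), Submodule.mem_annihilator,
    ← Ideal.span_singleton_le_iff_mem, ← mul_le_mul_iff_of_pos_left (bot_lt_iff_ne_bot.2 hJ), hJK,
    mul_comm, Ideal.span_singleton_mul_le_iff]
  simp only [Ideal.mem_map_iff_of_surjective _ Ideal.Quotient.mk_surjective, forall_exists_index,
    and_imp, forall_apply_eq_imp_iff₂, smul_eq_mul, ← map_mul, Ideal.Quotient.eq_zero_iff_mem]

theorem Ideal.annihilator_map_mk_pow {O : Type*} [CommRing O] [IsDedekindDomain O]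
    {p : Ideal O} (hp : p ≠ ⊥) (r e : ℕ) :
    Submodule.annihilator ((p ^ e).map (Ideal.Quotient.mk (p ^ r))) =
      (p ^ (r - e)).map (Ideal.Quotient.mk (p ^ r)) := by
  -- For `r ≤ e` both sides are everything: `p ^ e` dies in `O ⧸ p ^ r` and `r - e` truncates to `0`.
  rcases le_total e r with h | h
  · exact Ideal.annihilator_map_mk_of_mul_eq (pow_ne_zero _ hp)
      (by rw [← pow_add, Nat.add_sub_cancel' h])
  · rw [Nat.sub_eq_zero_of_le h, pow_zero, Ideal.one_eq_top, Ideal.map_top,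
      (Ideal.map_eq_bot_iff_le_ker _).2 (by rw [Ideal.mk_ker]; exact Ideal.pow_le_pow_right h),
      Submodule.annihilator_bot]

theorem orthogonal_complement_type_general
    (O : Type*) [CommRing O] [IsDedekindDomain O]
    (p : Ideal O) (hp0 : p ≠ ⊥) (r : ℕ)
    (d : ℕ)
    (e : Fin d → ℕ)
    (M : Submodule (O ⧸ p ^ r) (Fin d → O ⧸ p ^ r))
    (hM : ∃ g : (Fin d → O ⧸ p ^ r) ≃ₗ[O ⧸ p ^ r] (Fin d → O ⧸ p ^ r),
      Submodule.map (g : (Fin d → O ⧸ p ^ r) →ₗ[O ⧸ p ^ r] (Fin d → O ⧸ p ^ r)) M =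
        Submodule.pi Set.univ
          (fun i => (Ideal.map (Ideal.Quotient.mk (p ^ r)) (p ^ e i) :
            Submodule (O ⧸ p ^ r) (O ⧸ p ^ r)))) :
    ∃ g : (Fin d → O ⧸ p ^ r) ≃ₗ[O ⧸ p ^ r] (Fin d → O ⧸ p ^ r),
      Submodule.map (g : (Fin d → O ⧸ p ^ r) →ₗ[O ⧸ p ^ r] (Fin d → O ⧸ p ^ r))
          ((stdBilin (O ⧸ p ^ r) d).orthogonal M) =
        Submodule.pi Set.univ
          (fun i => (Ideal.map (Ideal.Quotient.mk (p ^ r)) (p ^ (r - e i.rev)) :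
            Submodule (O ⧸ p ^ r) (O ⧸ p ^ r))) := by
  obtain ⟨g, hg⟩ := hM
  have hperp : ((stdBilin _ d).orthogonal M).map ((transposeEquiv g).symm : _ →ₗ[O ⧸ p ^ r] _) =
      (stdBilin _ d).orthogonal (M.map (g : _ →ₗ[O ⧸ p ^ r] _)) := by
    rw [Submodule.map_equiv_eq_comap_symm, LinearEquiv.symm_symm,
      BilinForm.orthogonal_map_of_isAdjointPair _ (isAdjointPair_transposeEquiv g)]
  refine ⟨(transposeEquiv g).symm ≪≫ₗ LinearEquiv.funCongrLeft _ _ Fin.revPerm, ?_⟩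
  rw [LinearEquiv.coe_trans, Submodule.map_comp, hperp, hg, orthogonal_stdBilin_pi,
    Submodule.map_funCongrLeft_pi]
  simp only [Fin.revPerm_apply, Ideal.annihilator_map_mk_pow hp0]

/-- If `M ≤ O_r^d` is of type `(m; k_1,…,k_t)` (exponent function `e`), then its
orthogonal complement w.r.t. the standard bilinear form is of type
`(d-m-t; r-k_t,…,r-k_1)` (exponent function `i ↦ r - e (rev i)`). -/
theorem orthogonal_complement_type
    (O : Type*) [CommRing O] [IsDomain O] [IsDedekindDomain O]
    (p : Ideal O) (hp : p.IsPrime) (hp0 : p ≠ ⊥) (r : ℕ) (hr : 1 ≤ r)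
    (d m t : ℕ) (hmt : m + t ≤ d)
    (e : Fin d → ℕ)
    (he0 : ∀ i : Fin d, (i : ℕ) < m → e i = 0)
    (hemid : ∀ i : Fin d, m ≤ (i : ℕ) → (i : ℕ) < m + t → 0 < e i ∧ e i < r)
    (hetail : ∀ i : Fin d, m + t ≤ (i : ℕ) → e i = r)
    (M : Submodule (O ⧸ p ^ r) (Fin d → O ⧸ p ^ r))
    (hM : ∃ g : (Fin d → O ⧸ p ^ r) ≃ₗ[O ⧸ p ^ r] (Fin d → O ⧸ p ^ r),
      Submodule.map (g : (Fin d → O ⧸ p ^ r) →ₗ[O ⧸ p ^ r] (Fin d → O ⧸ p ^ r)) M =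
        Submodule.pi Set.univ
          (fun i => (Ideal.map (Ideal.Quotient.mk (p ^ r)) (p ^ e i) :
            Submodule (O ⧸ p ^ r) (O ⧸ p ^ r)))) :
    ∃ g : (Fin d → O ⧸ p ^ r) ≃ₗ[O ⧸ p ^ r] (Fin d → O ⧸ p ^ r),
      Submodule.map (g : (Fin d → O ⧸ p ^ r) →ₗ[O ⧸ p ^ r] (Fin d → O ⧸ p ^ r))
          ((stdBilin (O ⧸ p ^ r) d).orthogonal M) =
        Submodule.pi Set.univ
          (fun i => (Ideal.map (Ideal.Quotient.mk (p ^ r)) (p ^ (r - e i.rev)) :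
            Submodule (O ⧸ p ^ r) (O ⧸ p ^ r))) :=
  orthogonal_complement_type_general O p hp0 r d e M hM
end

section
/- For d ≥ 3 and r ≥ 2, the pair (B, N), where B ≤ GL_d(O_r) is the group of upper triangular invertible matrices and N the group of monomial matrices, is not a Tits (B,N)-pair: there exist s in the set of simple transposition permutation matrices and w in the Weyl group with sBw not contained in BswB ∪ BwB. -/
/-!
Take `s = w` the transposition `(1 2)`, so that `sw = 1`, and a uniformiser `π`, which in
`O / p^r` is nonzero (as `r ≥ 2`) but not a unit. The element `x = s (1 + π E₁₂) s = 1 + π E₂₁`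
lies in `sBw`. It is not in `BswB = B`, because its `(2,1)` entry `π` is nonzero, and it is not
in `BwB`, because the `(2,1)` entry of any `b₁ s b₂` is the product of two diagonal entries of
`b₁, b₂`, hence a unit.
-/

open Matrix

/-- `g ∈ GL_d(R)` is upper triangular. -/
def IsUpperTriGL {d : ℕ} {R : Type*} [CommRing R] (g : GL (Fin d) R) : Prop :=
  ∀ i j : Fin d, j < i → (g : Matrix (Fin d) (Fin d) R) i j = 0

/-- `g ∈ GL_d(R)` is a monomial matrix. -/
def IsMonomialGL {d : ℕ} {R : Type*} [CommRing R] (g : GL (Fin d) R) : Prop :=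
  ∃ (σ : Equiv.Perm (Fin d)) (u : Fin d → Rˣ),
    ∀ i j : Fin d, (g : Matrix (Fin d) (Fin d) R) i j = if i = σ j then (u j : R) else 0

/-- `g ∈ GL_d(R)` is the permutation matrix of a simple transposition `(i i+1)`. -/
def IsSimpleTranspositionGL {d : ℕ} {R : Type*} [CommRing R] (g : GL (Fin d) R) : Prop :=
  ∃ (i : Fin d) (h : (i : ℕ) + 1 < d), ∀ a b : Fin d,
    (g : Matrix (Fin d) (Fin d) R) a b =
      if (Equiv.swap i ⟨(i : ℕ) + 1, h⟩) a = b then 1 else 0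

section Permutation

variable {n : Type*} [Fintype n] [DecidableEq n] (R : Type*) [CommRing R]

def Equiv.Perm.permGL (σ : Equiv.Perm n) : GL n R :=
  ⟨σ.permMatrix R, σ⁻¹.permMatrix R, by simp [← permMatrix_mul], by simp [← permMatrix_mul]⟩

@[simp]
lemma Equiv.Perm.coe_permGL (σ : Equiv.Perm n) :
    ((σ.permGL R : GL n R) : Matrix n n R) = σ.permMatrix R :=
  rfl

lemma Equiv.Perm.permGL_swap_mul_self (i j : n) :
    (Equiv.swap i j).permGL R * (Equiv.swap i j).permGL R = 1 := by
  ext : 1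
  simp [← permMatrix_mul]

lemma Equiv.Perm.permMatrix_mul_mul_permMatrix_apply (σ : Equiv.Perm n)
    (M : Matrix n n R) (a b : n) :
    (σ.permMatrix R * M * σ.permMatrix R) a b = M (σ a) (σ.symm b) := by
  simp [PEquiv.toMatrix_toPEquiv_mul, PEquiv.mul_toMatrix_toPEquiv]

lemma Equiv.Perm.isMonomialGL_permGL {d : ℕ} (σ : Equiv.Perm (Fin d)) :
    IsMonomialGL (σ.permGL R) :=
  ⟨σ.symm, 1, fun i j => by simp [PEquiv.toMatrix_apply, Equiv.eq_symm_apply]⟩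

lemma isSimpleTranspositionGL_permGL_swap {d : ℕ} (i : Fin d) (h : (i : ℕ) + 1 < d) :
    IsSimpleTranspositionGL ((Equiv.swap i ⟨(i : ℕ) + 1, h⟩).permGL R) :=
  ⟨i, h, fun a b => by simp [PEquiv.toMatrix_apply]⟩

end Permutation

namespace IsUpperTriGL

variable {R : Type*} [CommRing R] {d : ℕ}

lemma mul {g h : GL (Fin d) R} (hg : IsUpperTriGL g) (hh : IsUpperTriGL h) :
    IsUpperTriGL (g * h) :=
  BlockTriangular.mul (b := id) hg hh

lemma isUnit_apply_self {g : GL (Fin d) R} (hg : IsUpperTriGL g) (i : Fin d) :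
    IsUnit ((g : Matrix (Fin d) (Fin d) R) i i) := by
  have hdet : IsUnit (∏ k, (g : Matrix (Fin d) (Fin d) R) k k) := by
    rw [← det_of_isUpperTriangular hg]
    exact (isUnit_iff_isUnit_det _).mp g.isUnit
  exact isUnit_of_dvd_unit (Finset.dvd_prod_of_mem (fun k => (g : Matrix (Fin d) (Fin d) R) k k)
    (Finset.mem_univ i)) hdet

lemma toGL_transvection {i j : Fin d} (hij : i < j) (c : R) :
    IsUpperTriGL (SpecialLinearGroup.toGL (SpecialLinearGroup.transvection hij.ne c)) :=
  blockTriangular_transvection (b := id) hij.le c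

/-- Only the term through the diagonal entries survives: the row `j` of `b₁ * s` and the
column `i` of `b₂` are supported on `k ≥ i` and `k ≤ i` respectively. -/
lemma mul_permGL_swap_mul_apply {b₁ b₂ : GL (Fin d) R} (h₁ : IsUpperTriGL b₁)
    (h₂ : IsUpperTriGL b₂) {i j : Fin d} (hij : i < j) :
    ((b₁ * (Equiv.swap i j).permGL R * b₂ : GL (Fin d) R) : Matrix (Fin d) (Fin d) R) j i =
      (b₁ : Matrix (Fin d) (Fin d) R) j j * (b₂ : Matrix (Fin d) (Fin d) R) i i := by
  rw [Units.val_mul, Units.val_mul, Equiv.Perm.coe_permGL, mul_apply,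
    Finset.sum_eq_single i]
  · simp [PEquiv.mul_toMatrix_toPEquiv]
  · intro k _ hki
    rcases lt_or_gt_of_ne hki with hk | hk
    · rw [PEquiv.mul_toMatrix_toPEquiv, submatrix_apply, id, Equiv.symm_swap,
        Equiv.swap_apply_of_ne_of_ne hk.ne (hk.trans hij).ne, h₁ j k (hk.trans hij), zero_mul]
    · rw [h₂ k i hk, mul_zero]
  · simp

end IsUpperTriGL

theorem exists_not_BN_pair_of_ne_zero_not_isUnit {R : Type*} [CommRing R] {d : ℕ} (hd : 2 ≤ d)
    {π : R} (hπ0 : π ≠ 0) (hπu : ¬IsUnit π) :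
    ∃ s w : GL (Fin d) R,
      IsSimpleTranspositionGL s ∧ IsMonomialGL w ∧
      ¬ ({x : GL (Fin d) R | ∃ b, IsUpperTriGL b ∧ x = s * b * w} ⊆
          {x | ∃ b₁ b₂, IsUpperTriGL b₁ ∧ IsUpperTriGL b₂ ∧ x = b₁ * (s * w) * b₂} ∪
          {x | ∃ b₁ b₂, IsUpperTriGL b₁ ∧ IsUpperTriGL b₂ ∧ x = b₁ * w * b₂}) := by
  set i : Fin d := ⟨0, by omega⟩
  set j : Fin d := ⟨(i : ℕ) + 1, by simp [i]; omega⟩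
  have hij : i < j := Fin.lt_def.mpr (Nat.lt_succ_self _)
  set s := (Equiv.swap i j).permGL R
  refine ⟨s, s, isSimpleTranspositionGL_permGL_swap R i _,
    Equiv.Perm.isMonomialGL_permGL R _, fun hsub => ?_⟩
  set b := SpecialLinearGroup.toGL (SpecialLinearGroup.transvection hij.ne π)
  have hx : ((s * b * s : GL (Fin d) R) : Matrix (Fin d) (Fin d) R) j i = π := by
    simp [s, b, Equiv.Perm.permMatrix_mul_mul_permMatrix_apply,
      SpecialLinearGroup.transvection_coe, one_apply_ne hij.ne]
  rcases hsub ⟨b, IsUpperTriGL.toGL_transvection hij π, rfl⟩ with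
    ⟨b₁, b₂, h₁, h₂, heq⟩ | ⟨b₁, b₂, h₁, h₂, heq⟩
  · rw [heq, Equiv.Perm.permGL_swap_mul_self, mul_one, h₁.mul h₂ j i hij] at hx
    exact hπ0 hx.symm
  · rw [heq, h₁.mul_permGL_swap_mul_apply h₂ hij] at hx
    exact hπu (hx ▸ (h₁.isUnit_apply_self j).mul (h₂.isUnit_apply_self i))

theorem Ideal.exists_ne_zero_not_isUnit_quotient_pow {O : Type*} [CommRing O]
    [IsDedekindDomain O] {p : Ideal O} [p.IsPrime] (hp0 : p ≠ ⊥) {r : ℕ} (hr : 2 ≤ r) :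
    ∃ π : O ⧸ p ^ r, π ≠ 0 ∧ ¬IsUnit π := by
  obtain ⟨π, hπp, hπp2⟩ := SetLike.exists_of_lt (Ideal.pow_succ_lt_pow hp0 1)
  rw [pow_one] at hπp
  refine ⟨Ideal.Quotient.mk _ π, fun h => hπp2 ?_, fun h => ?_⟩
  · exact Ideal.pow_le_pow_right hr (Ideal.Quotient.eq_zero_iff_mem.mp h)
  · have : Nontrivial (O ⧸ p) := Ideal.Quotient.nontrivial_iff.mpr ‹p.IsPrime›.ne_top
    have hu := h.map (Ideal.Quotient.factor (Ideal.pow_le_self (by omega : r ≠ 0)))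
    rw [Ideal.Quotient.factor_mk, Ideal.Quotient.eq_zero_iff_mem.mpr hπp] at hu
    exact not_isUnit_zero hu

theorem not_BN_pair_general
    (O : Type*) [CommRing O] [IsDedekindDomain O]
    (p : Ideal O) (hp : p.IsPrime) (hp0 : p ≠ ⊥) (r : ℕ) (hr : 2 ≤ r)
    (d : ℕ) (hd : 3 ≤ d) :
    ∃ s w : GL (Fin d) (O ⧸ p ^ r),
      IsSimpleTranspositionGL s ∧ IsMonomialGL w ∧
      ¬ ({x : GL (Fin d) (O ⧸ p ^ r) | ∃ b, IsUpperTriGL b ∧ x = s * b * w} ⊆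
          {x | ∃ b₁ b₂, IsUpperTriGL b₁ ∧ IsUpperTriGL b₂ ∧ x = b₁ * (s * w) * b₂} ∪
          {x | ∃ b₁ b₂, IsUpperTriGL b₁ ∧ IsUpperTriGL b₂ ∧ x = b₁ * w * b₂}) := by
  obtain ⟨π, hπ0, hπu⟩ := Ideal.exists_ne_zero_not_isUnit_quotient_pow hp0 hr
  exact exists_not_BN_pair_of_ne_zero_not_isUnit (by omega) hπ0 hπu

/-- For `d ≥ 3` and `r ≥ 2`, the pair `(B,N)` in `GL_d(O_r)` (upper triangular and
monomial matrices) is not a Tits (B,N)-pair: there are a simple transposition matrix `s`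
and a monomial matrix `w` with `sBw ⊄ BswB ∪ BwB`. -/
theorem not_BN_pair
    (O : Type*) [CommRing O] [IsDomain O] [IsDedekindDomain O]
    (p : Ideal O) (hp : p.IsPrime) (hp0 : p ≠ ⊥) (r : ℕ) (hr : 2 ≤ r)
    (d : ℕ) (hd : 3 ≤ d) :
    ∃ s w : GL (Fin d) (O ⧸ p ^ r),
      IsSimpleTranspositionGL s ∧ IsMonomialGL w ∧
      ¬ ({x : GL (Fin d) (O ⧸ p ^ r) | ∃ b, IsUpperTriGL b ∧ x = s * b * w} ⊆
          {x | ∃ b₁ b₂, IsUpperTriGL b₁ ∧ IsUpperTriGL b₂ ∧ x = b₁ * (s * w) * b₂} ∪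
          {x | ∃ b₁ b₂, IsUpperTriGL b₁ ∧ IsUpperTriGL b₂ ∧ x = b₁ * w * b₂}) :=
  not_BN_pair_general O p hp hp0 r hr d hd
end
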